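/- arXiv:1611.00682 — 9 statements merged into one kernel-verified Lean document; each statement's English description precedes it below -/
import Mathlib

section
/- If g ∈ P with Taylor expansion g(z) = 1 + Σ_{n≥1} p_n z^n and 1 ≤ k ≤ n−1, then for every w ∈ ℂ one has |p_n − w·p_k·p_{n−k}| ≤ 2·max{1, |1 − 2w|}. -/
/-!
For `0 ≤ r < 1` the integral of `|Φ(θ)|² g(r e^{iθ})` over a period has nonnegative real part for
every trigonometric polynomial `Φ`. Expanding `g` in its power series, for
`Φ = u + v e^{ikθ} + w e^{i(k+l)θ}` this says that the Hermitian form of the Toeplitz-type matrix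
built from `1, p_k r^k, p_l r^l, p_{k+l} r^{k+l}` is positive semidefinite. Eliminating `v` (a Schur
complement) and rotating `w` against `p_{k+l} - p_k p_l / 2` gives, as `r → 1`, Livingston's
inequality `|p_{k+l} - p_k p_l / 2| + |p_k| |p_l| / 2 ≤ 2`. The claim is the triangle inequality
applied to `p_n - w p_k p_{n-k} = (p_n - p_k p_{n-k} / 2) + (1 - 2w) p_k p_{n-k} / 2`.
-/

open Metric Complex ComplexConjugate MeasureTheory

section CircleIntegrals

variable {g : ℂ → ℂ} {p : ℕ → ℂ} {r : ℝ}

theorem circleMap_mem_ball_zero_one (hr0 : 0 ≤ r) (hr1 : r < 1) (θ : ℝ) :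
    circleMap 0 r θ ∈ ball (0 : ℂ) 1 := by
  simpa [abs_of_nonneg hr0] using hr1

theorem summable_norm_mul_pow_of_hasSum
    (hsum : ∀ z ∈ ball (0 : ℂ) 1, HasSum (fun n => p n * z ^ n) (g z))
    (hr0 : 0 ≤ r) (hr1 : r < 1) : Summable fun n => ‖p n‖ * r ^ n := by
  obtain ⟨ρ, hrρ, hρ1⟩ := exists_between hr1
  have hρ : 0 < ρ := hr0.trans_lt hrρ
  have hρ_mem : (ρ : ℂ) ∈ ball (0 : ℂ) 1 := by simpa [abs_of_pos hρ] using hρ1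
  have hbdd : (fun n => ‖p n‖ * ρ ^ n) =O[Filter.atTop] (fun _ => (1 : ℝ)) := by
    refine (tendsto_norm_zero.comp (hsum _ hρ_mem).summable.tendsto_atTop_zero).isBigO_one ℝ
      |>.congr_left fun n => ?_
    simp [abs_of_pos hρ]
  refine summable_of_isBigO_nat (summable_geometric_of_lt_one (by positivity)
    ((div_lt_one hρ).2 hrρ)) ((hbdd.mul (Asymptotics.isBigO_refl (fun n => (r / ρ) ^ n) _)).congr
      (fun n => ?_) (fun n => one_mul _))
  rw [div_pow, mul_assoc, mul_div_cancel₀ _ (pow_ne_zero _ hρ.ne')]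

theorem continuous_comp_circleMap
    (hsum : ∀ z ∈ ball (0 : ℂ) 1, HasSum (fun n => p n * z ^ n) (g z))
    (hr0 : 0 ≤ r) (hr1 : r < 1) : Continuous fun θ => g (circleMap 0 r θ) := by
  have hg : (fun θ => g (circleMap 0 r θ)) = fun θ => ∑' n, p n * circleMap 0 r θ ^ n :=
    funext fun θ => ((hsum _ (circleMap_mem_ball_zero_one hr0 hr1 θ)).tsum_eq).symm
  rw [hg]
  refine continuous_tsum (fun n => by fun_prop) (summable_norm_mul_pow_of_hasSum hsum hr0 hr1)
    fun n θ => ?_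
  simp [abs_of_nonneg hr0]

theorem integral_exp_intCast_mul_mul_I (m : ℤ) :
    ∫ θ in (0 : ℝ)..2 * Real.pi, exp (m * θ * I) = if m = 0 then (2 * Real.pi : ℂ) else 0 := by
  split_ifs with hm
  · simp [hm]
  · have hmI : (m : ℂ) * I ≠ 0 := by simpa using hm
    simp_rw [mul_right_comm _ _ I]
    have : (m : ℂ) * I * ((2 * Real.pi : ℝ) : ℂ) = m * (2 * Real.pi * I) := by push_cast; ring
    rw [integral_exp_mul_complex hmI, this, exp_int_mul_two_pi_mul_I]
    simp

theorem integral_exp_mul_conj_exp_mul_comp_circleMap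
    (hsum : ∀ z ∈ ball (0 : ℂ) 1, HasSum (fun n => p n * z ^ n) (g z))
    (hr0 : 0 ≤ r) (hr1 : r < 1) (i j : ℕ) :
    ∫ θ in (0 : ℝ)..2 * Real.pi, exp (i * θ * I) * conj (exp (j * θ * I)) * g (circleMap 0 r θ)
      = 2 * Real.pi * if i ≤ j then p (j - i) * r ^ (j - i) else 0 := by
  set F : ℕ → ℝ → ℂ := fun n θ => p n * r ^ n * exp (((n + i - j : ℤ) : ℂ) * θ * I)
  have hF_sum : ∀ θ, HasSum (fun n => F n θ)
      (exp (i * θ * I) * conj (exp (j * θ * I)) * g (circleMap 0 r θ)) := by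
    intro θ
    refine ((hsum _ (circleMap_mem_ball_zero_one hr0 hr1 θ)).mul_left _).congr_fun fun n => ?_
    rw [← exp_conj, circleMap_zero, mul_pow, ← exp_nat_mul]
    simp only [F, map_mul, conj_ofReal, conj_natCast, conj_I]
    have : ((n + i - j : ℤ) : ℂ) * θ * I = i * θ * I + j * θ * -I + n * (θ * I) := by
      push_cast; ring
    rw [this, exp_add, exp_add]
    ring
  have hF_int : ∀ n, ∫ θ in (0 : ℝ)..2 * Real.pi, F n θ
      = p n * r ^ n * if (n + i - j : ℤ) = 0 then (2 * Real.pi : ℂ) else 0 := fun n => by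
    rw [intervalIntegral.integral_const_mul, integral_exp_intCast_mul_mul_I]
  have hF_norm : ∀ n θ, ‖F n θ‖ = ‖p n‖ * r ^ n := fun n θ => by
    rw [norm_mul, norm_mul, norm_pow, norm_real, Real.norm_of_nonneg hr0, ← ofReal_intCast,
      ← ofReal_mul, norm_exp_ofReal_mul_I, mul_one]
  have hsum_int := intervalIntegral.hasSum_integral_of_dominated_convergence (F := F)
    (μ := volume) (a := 0) (b := 2 * Real.pi) (fun n _ => ‖p n‖ * r ^ n)
    (fun n => (Continuous.aestronglyMeasurable (by fun_prop)))
    (fun n => .of_forall fun θ _ => (hF_norm n θ).le)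
    (.of_forall fun θ _ => summable_norm_mul_pow_of_hasSum hsum hr0 hr1)
    intervalIntegrable_const (.of_forall fun θ _ => hF_sum θ)
  simp_rw [hF_int] at hsum_int
  refine hsum_int.unique ?_
  split_ifs with hij
  · convert hasSum_single (j - i) fun n hn => ?_ using 1
    · rw [if_pos (by omega)]; ring
    · rw [if_neg (by omega), mul_zero]
  · convert hasSum_zero with n
    · rw [if_neg (by omega), mul_zero]
    · rw [mul_zero]

theorem re_integral_normSq_mul_comp_circleMap_nonneg
    (hg : Continuous fun θ => g (circleMap 0 r θ)) (hre : ∀ θ, 0 ≤ (g (circleMap 0 r θ)).re)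
    {Φ : ℝ → ℂ} (hΦ : Continuous Φ) :
    0 ≤ (∫ θ in (0 : ℝ)..2 * Real.pi, (normSq (Φ θ) : ℂ) * g (circleMap 0 r θ)).re := by
  have hint : IntervalIntegrable (fun θ => (normSq (Φ θ) : ℂ) * g (circleMap 0 r θ))
      volume 0 (2 * Real.pi) :=
    ((continuous_ofReal.comp (continuous_normSq.comp hΦ)).mul hg).intervalIntegrable _ _
  rw [← RCLike.re_eq_complex_re, ← intervalIntegral.intervalIntegral_re hint]
  refine intervalIntegral.integral_nonneg (by positivity) fun θ _ => ?_
  rw [RCLike.re_eq_complex_re, re_ofReal_mul]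
  exact mul_nonneg (normSq_nonneg _) (hre θ)

theorem re_sum_mul_conj_mul_coeff_nonneg
    (hsum : ∀ z ∈ ball (0 : ℂ) 1, HasSum (fun n => p n * z ^ n) (g z))
    (hre : ∀ z ∈ ball (0 : ℂ) 1, 0 < (g z).re) (hr0 : 0 ≤ r) (hr1 : r < 1)
    {ι : Type*} [Fintype ι] (x : ι → ℕ) (u : ι → ℂ) :
    0 ≤ (∑ i, ∑ j, u i * conj (u j) *
      if x i ≤ x j then p (x j - x i) * r ^ (x j - x i) else 0).re := by
  set Φ : ℝ → ℂ := fun θ => ∑ i, u i * exp (x i * θ * I)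
  have hnormSq : ∀ θ, (normSq (Φ θ) : ℂ) * g (circleMap 0 r θ) = ∑ i, ∑ j, u i * conj (u j) *
      (exp (x i * θ * I) * conj (exp (x j * θ * I)) * g (circleMap 0 r θ)) := fun θ => by
    rw [← mul_conj, map_sum, Finset.sum_mul_sum, Finset.sum_mul]
    refine Finset.sum_congr rfl fun i _ => ?_
    rw [Finset.sum_mul]
    refine Finset.sum_congr rfl fun j _ => ?_
    rw [map_mul]
    ring
  have hcont : ∀ i j, Continuous fun θ : ℝ => u i * conj (u j) *
      (exp (x i * θ * I) * conj (exp (x j * θ * I)) * g (circleMap 0 r θ)) := fun i j => by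
    have hconj := continuous_conj.comp (by fun_prop : Continuous fun θ : ℝ => exp (x j * θ * I))
    exact continuous_const.mul (((by fun_prop : Continuous fun θ : ℝ => exp (x i * θ * I)).mul
      hconj).mul (continuous_comp_circleMap hsum hr0 hr1))
  have hΦ : Continuous Φ := by fun_prop
  have h := re_integral_normSq_mul_comp_circleMap_nonneg (continuous_comp_circleMap hsum hr0 hr1)
    (fun θ => (hre _ (circleMap_mem_ball_zero_one hr0 hr1 θ)).le) hΦ
  simp_rw [hnormSq] at h
  rw [intervalIntegral.integral_finsetSum fun i _ => ?_] at h
  · simp_rw [intervalIntegral.integral_finsetSum fun j _ => (hcont _ j).intervalIntegrable _ _,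
      intervalIntegral.integral_const_mul,
      integral_exp_mul_conj_exp_mul_comp_circleMap hsum hr0 hr1,
      mul_left_comm _ (2 * (Real.pi : ℂ)), ← Finset.mul_sum] at h
    rw [show (2 : ℂ) * Real.pi = ((2 * Real.pi : ℝ) : ℂ) by push_cast; ring, re_ofReal_mul] at h
    exact (mul_nonneg_iff_of_pos_left (by positivity)).1 h
  · exact (continuous_finsetSum _ fun j _ => hcont i j).intervalIntegrable _ _

end CircleIntegrals

theorem norm_sub_mul_div_two_add_le_two_of_re_nonneg (A B D : ℂ)
    (h : ∀ u v w : ℂ, 0 ≤ (u * conj u + v * conj v + w * conj w + u * conj v * A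
      + v * conj w * B + u * conj w * D).re) :
    ‖D - A * B / 2‖ + ‖A‖ * ‖B‖ / 2 ≤ 2 := by
  set E := D - A * B / 2
  set ω := exp (arg E * I)
  have hω : ω * conj ω = 1 := by
    rw [mul_conj', norm_exp_ofReal_mul_I]; simp
  have hE : E * conj ω = ‖E‖ := by
    conv_lhs => rw [← norm_mul_exp_arg_mul_I E]
    rw [mul_assoc, hω, mul_one]
  have hA := mul_conj' A
  have hB := mul_conj' B
  -- for `u = 1` and fixed `w` this `v` minimises the form; the phase of `w` turns the
  -- remaining cross term into `-2‖E‖`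
  set v := (ω * conj B - A) / 2
  have hS := h 1 v (-ω)
  set S := 1 * conj 1 + v * conj v + -ω * conj (-ω) + 1 * conj v * A + v * conj (-ω) * B
    + 1 * conj (-ω) * D with hSdef
  have key : S + conj S = ((2 * (2 - ‖A‖ ^ 2 / 4 - ‖B‖ ^ 2 / 4 - ‖E‖) : ℝ) : ℂ) := by
    have hE' := congrArg conj hE
    simp only [map_mul, conj_conj, conj_ofReal] at hE'
    simp only [hSdef, v, E, map_add, map_mul, map_sub, map_div₀, map_neg, map_one, conj_conj,
      map_ofNat] at hE' ⊢
    push_cast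
    linear_combination (2 - B * conj B / 2) * hω - hB / 2 - hA / 2 - hE - hE'
  rw [add_conj] at key
  have hre : S.re = 2 - ‖A‖ ^ 2 / 4 - ‖B‖ ^ 2 / 4 - ‖E‖ := by
    have := ofReal_injective key
    linarith
  nlinarith [sq_nonneg (‖A‖ - ‖B‖)]

theorem norm_coeff_add_sub_mul_div_two_add_le_two {g : ℂ → ℂ} {p : ℕ → ℂ} (hp0 : p 0 = 1)
    (hsum : ∀ z ∈ ball (0 : ℂ) 1, HasSum (fun n => p n * z ^ n) (g z))
    (hre : ∀ z ∈ ball (0 : ℂ) 1, 0 < (g z).re) {k l : ℕ} (hk : 1 ≤ k) (hl : 1 ≤ l) :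
    ‖p (k + l) - p k * p l / 2‖ + ‖p k‖ * ‖p l‖ / 2 ≤ 2 := by
  set F : ℝ → ℝ := fun r => ‖p (k + l) * r ^ (k + l) - p k * r ^ k * (p l * r ^ l) / 2‖
    + ‖p k * r ^ k‖ * ‖p l * r ^ l‖ / 2
  have hF : Set.Ico 0 1 ⊆ {r | F r ≤ 2} := by
    rintro r ⟨hr0, hr1⟩
    refine norm_sub_mul_div_two_add_le_two_of_re_nonneg _ _ _ fun u v w => ?_
    have h := re_sum_mul_conj_mul_coeff_nonneg hsum hre hr0 hr1 ![0, k, k + l] ![u, v, w]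
    convert h using 2
    have hk0 : k ≠ 0 := by omega
    have hkl : ¬ k + l ≤ k := by omega
    simp only [Fin.sum_univ_three, Matrix.cons_val_zero, Matrix.cons_val_one, Matrix.cons_val,
      le_refl, zero_le, le_add_iff_nonneg_right, nonpos_iff_eq_zero, Nat.add_eq_zero_iff, hk0, hkl,
      false_and, if_true, if_false, tsub_zero, tsub_self, add_tsub_cancel_left, hp0, pow_zero]
    ring
  have hF_closed : IsClosed {r | F r ≤ 2} := isClosed_le (by fun_prop) continuous_const
  have h1 : (1 : ℝ) ∈ closure (Set.Ico 0 1) := by simp [closure_Ico]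
  simpa [F] using hF_closed.closure_subset_iff.2 hF h1

/-- Efraimidis' inequality: if `g` is in the Carathéodory class `P`
(analytic on the unit disk with `g(0) = 1` and `Re g > 0`, with Taylor
coefficients `p`), and `1 ≤ k ≤ n - 1`, then
`|p n - w * p k * p (n - k)| ≤ 2 * max 1 |1 - 2w|` for every `w : ℂ`. -/
theorem caratheodory_livingston_type (g : ℂ → ℂ) (p : ℕ → ℂ)
    (hp0 : p 0 = 1)
    (hsum : ∀ z ∈ ball (0 : ℂ) 1, HasSum (fun n : ℕ => p n * z ^ n) (g z))
    (hre : ∀ z ∈ ball (0 : ℂ) 1, 0 < (g z).re)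
    (n k : ℕ) (hk : 1 ≤ k) (hkn : k ≤ n - 1) :
    ∀ w : ℂ, ‖p n - w * p k * p (n - k)‖ ≤
      2 * max 1 ‖1 - 2 * w‖ := by
  intro w
  have h := norm_coeff_add_sub_mul_div_two_add_le_two hp0 hsum hre hk (by omega : 1 ≤ n - k)
  rw [Nat.add_sub_of_le (by omega : k ≤ n)] at h
  have hM := le_max_right 1 ‖1 - 2 * w‖
  have hM1 := le_max_left 1 ‖1 - 2 * w‖
  have hX := norm_nonneg (p n - p k * p (n - k) / 2)
  have hY := mul_nonneg (norm_nonneg (p k)) (norm_nonneg (p (n - k)))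
  calc ‖p n - w * p k * p (n - k)‖
      = ‖(p n - p k * p (n - k) / 2) + (1 - 2 * w) * (p k * p (n - k)) / 2‖ := by ring_nf
    _ ≤ ‖p n - p k * p (n - k) / 2‖ + ‖1 - 2 * w‖ * (‖p k‖ * ‖p (n - k)‖) / 2 :=
      (norm_add_le _ _).trans_eq (by simp)
    _ ≤ 2 * max 1 ‖1 - 2 * w‖ := by nlinarith [mul_le_mul_of_nonneg_right hM hY]
end

section
/- If g ∈ P with Taylor expansion g(z) = 1 + Σ_{n≥1} p_n z^n and 1 ≤ k ≤ n−1, then |p_n − (1/2)·p_k·p_{n−k}| + (1/2)·|p_k·p_{n−k}| ≤ 2. -/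
/-!
Fix `0 ≤ r < 1` and let `W x = Re g (r e(x))` on the circle. It is a positive weight whose
Fourier coefficients are `Ŵ 0 = 1` and `Ŵ m = p m r ^ m / 2` for `m ≥ 1`, so in `L²(W)` the
characters `e_m` are unit vectors with Gram matrix `⟪e_a, e_b⟫ = Ŵ (a - b)`. For unit vectors
`u, v, w`, projecting `u` and `w` off `v` and applying Cauchy–Schwarz gives
`‖⟪u, w⟫ - ⟪u, v⟫⟪v, w⟫‖ + ‖⟪u, v⟫‖ ‖⟪v, w⟫‖ ≤ 1`; with `u = e_n`, `v = e_(n-k)`, `w = e_0`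
this is the inequality multiplied by `r ^ n / 2`. Finally let `r → 1`.
-/

open Metric MeasureTheory AddCircle
open scoped InnerProductSpace ComplexConjugate NNReal ENNReal

section Gram

variable {E : Type*} [SeminormedAddCommGroup E] [InnerProductSpace ℂ E]

lemma norm_sub_inner_smul_sq_add_norm_inner_sq {v : E} (hv : ‖v‖ = 1) (x : E) :
    ‖x - ⟪v, x⟫_ℂ • v‖ ^ 2 + ‖⟪v, x⟫_ℂ‖ ^ 2 = ‖x‖ ^ 2 := by
  have hvv : ⟪v, v⟫_ℂ = 1 := by simp [inner_self_eq_norm_sq_to_K, hv]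
  have hperp : ⟪x - ⟪v, x⟫_ℂ • v, ⟪v, x⟫_ℂ • v⟫_ℂ = 0 := by
    simp only [inner_smul_right, inner_sub_left, inner_smul_left, hvv, inner_conj_symm]
    ring
  have h := norm_add_sq_eq_norm_sq_add_norm_sq_of_inner_eq_zero _ _ hperp
  rw [sub_add_cancel, norm_smul, hv, mul_one] at h
  nlinarith [h]

theorem norm_inner_sub_inner_mul_inner_add_le_one {u v w : E} (hu : ‖u‖ ≤ 1) (hv : ‖v‖ = 1)
    (hw : ‖w‖ ≤ 1) :
    ‖⟪u, w⟫_ℂ - ⟪u, v⟫_ℂ * ⟪v, w⟫_ℂ‖ + ‖⟪u, v⟫_ℂ‖ * ‖⟪v, w⟫_ℂ‖ ≤ 1 := by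
  have hvv : ⟪v, v⟫_ℂ = 1 := by simp [inner_self_eq_norm_sq_to_K, hv]
  have hproj : ⟪u - ⟪v, u⟫_ℂ • v, w - ⟪v, w⟫_ℂ • v⟫_ℂ = ⟪u, w⟫_ℂ - ⟪u, v⟫_ℂ * ⟪v, w⟫_ℂ := by
    simp only [inner_sub_left, inner_sub_right, inner_smul_left, inner_smul_right, hvv,
      inner_conj_symm]
    ring
  have hcs := norm_inner_le_norm (𝕜 := ℂ) (u - ⟪v, u⟫_ℂ • v) (w - ⟪v, w⟫_ℂ • v)
  rw [hproj] at hcs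
  have hu' := norm_sub_inner_smul_sq_add_norm_inner_sq hv u
  have hw' := norm_sub_inner_smul_sq_add_norm_inner_sq hv w
  rw [norm_inner_symm u v]
  nlinarith [mul_le_one₀ hu (norm_nonneg u) hu, mul_le_one₀ hw (norm_nonneg w) hw,
    sq_nonneg (‖u - ⟪v, u⟫_ℂ • v‖ - ‖w - ⟪v, w⟫_ℂ • v‖),
    sq_nonneg (‖⟪v, u⟫_ℂ‖ - ‖⟪v, w⟫_ℂ‖)]

end Gram

section Fourier

variable {T : ℝ}

lemma fourier_one_pow (x : AddCircle T) (m : ℕ) : fourier 1 x ^ m = fourier (m : ℤ) x := by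
  rw [fourier_one, fourier_apply, natCast_zsmul, toCircle_nsmul, Circle.coe_pow]

lemma norm_ofReal_mul_fourier (r : ℝ) (n : ℤ) (x : AddCircle T) :
    ‖(r : ℂ) * fourier n x‖ = |r| := by
  simp [Circle.norm_coe]

variable [hT : Fact (0 < T)]

lemma fourierCoeff_eq_inner_toLp (f : C(AddCircle T, ℂ)) (n : ℤ) :
    fourierCoeff f n = ⟪fourierLp 2 n, ContinuousMap.toLp 2 haarAddCircle ℂ f⟫_ℂ := by
  rw [← fourierCoeff_toLp, ← fourierBasis_repr, HilbertBasis.repr_apply_apply, coe_fourierBasis]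

theorem HasSum.fourierCoeff {ι : Type*} {u : ι → C(AddCircle T, ℂ)} {f : C(AddCircle T, ℂ)}
    (h : HasSum u f) (n : ℤ) : HasSum (fun i => fourierCoeff (u i) n) (fourierCoeff f n) := by
  simp only [fourierCoeff_eq_inner_toLp]
  exact ((innerSL ℂ (fourierLp 2 n)).comp (ContinuousMap.toLp 2 haarAddCircle ℂ)).hasSum h

theorem fourierCoeff_eq_of_hasSum_nat {c : ℕ → ℂ} {f : C(AddCircle T, ℂ)}
    (h : HasSum (fun m : ℕ => c m • fourier (m : ℤ)) f) (n : ℤ) :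
    fourierCoeff f n = if 0 ≤ n then c n.toNat else 0 := by
  have hn := h.fourierCoeff n
  simp only [ContinuousMap.coe_smul, fourierCoeff.const_smul, fourierCoeff_fourier,
    smul_eq_mul] at hn
  refine hn.unique ?_
  split_ifs with h0
  · convert hasSum_single (f := fun m : ℕ => c m * (Pi.single (m : ℤ) (1 : ℂ) : ℤ → ℂ) n) n.toNat
      fun m hm => ?_ using 1
    · simp [Int.toNat_of_nonneg h0]
    · simp only [Pi.single_apply, mul_ite, mul_one, mul_zero, ite_eq_right_iff]; omega
  · convert hasSum_zero with m
    simp only [Pi.single_apply, mul_ite, mul_one, mul_zero, ite_eq_right_iff]; omega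

theorem exists_hasSum_fourier_of_hasSum_pow {a : ℕ → ℂ} {F : ℂ → ℂ}
    (h : ∀ z ∈ ball (0 : ℂ) 1, HasSum (fun m => a m * z ^ m) (F z)) {r : ℝ} (hr0 : 0 ≤ r)
    (hr1 : r < 1) :
    ∃ G : C(AddCircle T, ℂ), (∀ x, G x = F (r * fourier 1 x)) ∧
      HasSum (fun m : ℕ => (a m * r ^ m) • fourier (m : ℤ)) G := by
  have hball (x : AddCircle T) : (r : ℂ) * fourier 1 x ∈ ball (0 : ℂ) 1 := by
    rwa [mem_ball_zero_iff, norm_ofReal_mul_fourier, abs_of_nonneg hr0]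
  have hsum : Summable fun m : ℕ => (a m * r ^ m) • (fourier (m : ℤ) : C(AddCircle T, ℂ)) := by
    refine .of_norm ?_
    simp only [norm_smul, fourier_norm, mul_one]
    exact (h r (by simpa [abs_of_nonneg hr0] using hr1)).summable.norm
  refine ⟨_, fun x => ?_, hsum.hasSum⟩
  refine ((ContinuousMap.evalCLM ℂ x).hasSum hsum.hasSum).unique ?_
  simpa [mul_pow, fourier_one_pow, mul_assoc, -fourier_apply] using h _ (hball x)

lemma fourierCoeff_conj (f : AddCircle T → ℂ) (n : ℤ) :
    fourierCoeff (fun x => conj (f x)) n = conj (fourierCoeff f (-n)) := by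
  simp only [fourierCoeff, ← integral_conj, neg_neg, smul_eq_mul, map_mul, fourier_neg]

lemma fourierCoeff_re {f : AddCircle T → ℂ} (hf : Integrable f haarAddCircle) (n : ℤ) :
    fourierCoeff (fun x => ((f x).re : ℂ)) n =
      (fourierCoeff f n + conj (fourierCoeff f (-n))) / 2 := by
  have hre : (fun x => ((f x).re : ℂ)) = (1 / 2 : ℂ) • (f + fun x => conj (f x)) := by
    ext x
    simp only [Complex.re_eq_add_conj, one_div, Pi.smul_apply, Pi.add_apply, smul_eq_mul]
    ring
  have hconj : Integrable (fun x => conj (f x)) haarAddCircle :=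
    (Complex.conjCLE : ℂ →L[ℝ] ℂ).integrable_comp hf
  rw [hre, fourierCoeff.const_smul, fourierCoeff.add hf hconj, Pi.add_apply,
    fourierCoeff_conj, smul_eq_mul]
  ring

lemma inner_toLp_fourier_withDensity {W : AddCircle T → ℝ≥0} (hW : Measurable W)
    [IsFiniteMeasure (haarAddCircle.withDensity fun x => (W x : ℝ≥0∞))] (a b : ℤ) :
    ⟪ContinuousMap.toLp 2 (haarAddCircle.withDensity fun x => (W x : ℝ≥0∞)) ℂ (fourier a),
      ContinuousMap.toLp 2 (haarAddCircle.withDensity fun x => (W x : ℝ≥0∞)) ℂ (fourier b)⟫_ℂ =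
    fourierCoeff (fun x => ((W x : ℝ) : ℂ)) (a - b) := by
  rw [ContinuousMap.inner_toLp, integral_withDensity_eq_integral_smul hW, fourierCoeff]
  congr 1
  ext x
  rw [neg_sub, sub_eq_add_neg, fourier_add, fourier_neg, NNReal.smul_def, smul_eq_mul,
    Complex.real_smul]
  ring

theorem norm_fourierCoeff_add_sub_mul_add_le_one {W : AddCircle T → ℝ≥0} (hW : Measurable W)
    (hWfin : ∫⁻ x, W x ∂haarAddCircle ≠ ∞)
    (hW1 : fourierCoeff (fun x => ((W x : ℝ) : ℂ)) 0 = 1) (a b : ℤ) :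
    ‖fourierCoeff (fun x => ((W x : ℝ) : ℂ)) (a + b) -
        fourierCoeff (fun x => ((W x : ℝ) : ℂ)) a * fourierCoeff (fun x => ((W x : ℝ) : ℂ)) b‖ +
      ‖fourierCoeff (fun x => ((W x : ℝ) : ℂ)) a‖ * ‖fourierCoeff (fun x => ((W x : ℝ) : ℂ)) b‖
      ≤ 1 := by
  have := isFiniteMeasure_withDensity hWfin
  set e : ℤ → Lp ℂ 2 (haarAddCircle.withDensity fun x => (W x : ℝ≥0∞)) :=
    fun j => ContinuousMap.toLp 2 _ ℂ (fourier j)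
  have hinner (i j : ℤ) : ⟪e i, e j⟫_ℂ = fourierCoeff (fun x => ((W x : ℝ) : ℂ)) (i - j) :=
    inner_toLp_fourier_withDensity hW i j
  have hnorm (j : ℤ) : ‖e j‖ = 1 := by
    have h := inner_self_eq_norm_sq_to_K (𝕜 := ℂ) (e j)
    rw [hinner, sub_self, hW1] at h
    refine (pow_eq_one_iff_of_nonneg (norm_nonneg _) two_ne_zero).1 ?_
    exact Complex.ofReal_eq_one.1 (by push_cast; exact h.symm)
  simpa [hinner] using
    norm_inner_sub_inner_mul_inner_add_le_one (hnorm (a + b)).le (hnorm b) (hnorm 0).le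

theorem exists_weight_fourierCoeff_eq {g : ℂ → ℂ} {p : ℕ → ℂ} (hp0 : p 0 = 1)
    (hsum : ∀ z ∈ ball (0 : ℂ) 1, HasSum (fun n : ℕ => p n * z ^ n) (g z))
    (hre : ∀ z ∈ ball (0 : ℂ) 1, 0 < (g z).re) {r : ℝ} (hr0 : 0 ≤ r) (hr1 : r < 1) :
    ∃ W : AddCircle T → ℝ≥0, Measurable W ∧ ∫⁻ x, W x ∂haarAddCircle ≠ ∞ ∧
      fourierCoeff (fun x => ((W x : ℝ) : ℂ)) 0 = 1 ∧
      ∀ m : ℕ, 1 ≤ m → fourierCoeff (fun x => ((W x : ℝ) : ℂ)) m = p m * r ^ m / 2 := by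
  obtain ⟨G, hG, hGsum⟩ := exists_hasSum_fourier_of_hasSum_pow (T := T) hsum hr0 hr1
  have hGre (x : AddCircle T) : 0 < (G x).re := by
    rw [hG]
    exact hre _ (by rwa [mem_ball_zero_iff, norm_ofReal_mul_fourier, abs_of_nonneg hr0])
  set W : AddCircle T → ℝ≥0 := fun x => (G x).re.toNNReal
  have hWc : Continuous W := continuous_real_toNNReal.comp (Complex.continuous_re.comp G.continuous)
  have hWG : (fun x => ((W x : ℝ) : ℂ)) = fun x => ((G x).re : ℂ) := by
    ext x; simp [W, Real.coe_toNNReal _ (hGre x).le]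
  have hGint : Integrable G haarAddCircle :=
    G.continuous.integrable_of_hasCompactSupport (.of_compactSpace _)
  have hcoeff (m : ℤ) : fourierCoeff (fun x => ((W x : ℝ) : ℂ)) m =
      ((if 0 ≤ m then p m.toNat * r ^ m.toNat else 0) +
        conj (if 0 ≤ -m then p (-m).toNat * r ^ (-m).toNat else 0)) / 2 := by
    rw [hWG, fourierCoeff_re hGint, fourierCoeff_eq_of_hasSum_nat hGsum,
      fourierCoeff_eq_of_hasSum_nat hGsum]
  refine ⟨W, hWc.measurable,
    ((BoundedContinuousFunction.mkOfCompact ⟨W, hWc⟩).lintegral_lt_top_of_nnreal _).ne,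
    by simp [hcoeff, hp0], fun m hm => ?_⟩
  rw [hcoeff, if_pos (by omega), if_neg (by omega)]
  simp

end Fourier

theorem norm_sub_half_mul_add_half_norm_mul_mul_pow_le {g : ℂ → ℂ} {p : ℕ → ℂ} (hp0 : p 0 = 1)
    (hsum : ∀ z ∈ ball (0 : ℂ) 1, HasSum (fun n : ℕ => p n * z ^ n) (g z))
    (hre : ∀ z ∈ ball (0 : ℂ) 1, 0 < (g z).re) {k l : ℕ} (hk : 1 ≤ k) (hl : 1 ≤ l) {r : ℝ}
    (hr0 : 0 ≤ r) (hr1 : r < 1) :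
    (‖p (k + l) - (1 / 2 : ℂ) * (p k * p l)‖ + (1 / 2 : ℝ) * ‖p k * p l‖) * r ^ (k + l) ≤ 2 := by
  have : Fact (0 < (1 : ℝ)) := ⟨one_pos⟩
  obtain ⟨W, hW, hWfin, hc0, hcpos⟩ :=
    exists_weight_fourierCoeff_eq (T := 1) hp0 hsum hre hr0 hr1
  have hgram := norm_fourierCoeff_add_sub_mul_add_le_one hW hWfin hc0 k l
  rw [← norm_mul, ← Nat.cast_add, hcpos _ hk, hcpos _ hl, hcpos _ (by omega)] at hgram
  have hsub : p (k + l) * r ^ (k + l) / 2 - p k * r ^ k / 2 * (p l * r ^ l / 2) =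
      (p (k + l) - 1 / 2 * (p k * p l)) * ((r ^ (k + l) : ℝ) : ℂ) / 2 := by
    push_cast; ring
  have hmul : p k * r ^ k / 2 * (p l * r ^ l / 2) = p k * p l * ((r ^ (k + l) : ℝ) : ℂ) / 4 := by
    push_cast; ring
  rw [hsub, hmul] at hgram
  simp only [norm_div, norm_mul, Complex.norm_real, Real.norm_of_nonneg (pow_nonneg hr0 _),
    Complex.norm_ofNat] at hgram ⊢
  linarith

open Filter Topology in
lemma le_of_forall_mul_pow_le {A B : ℝ} (n : ℕ) (h : ∀ r ∈ Set.Ioo (0 : ℝ) 1, A * r ^ n ≤ B) :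
    A ≤ B := by
  have hc : Continuous fun r : ℝ => A * r ^ n := by fun_prop
  have hlim : Tendsto (fun r : ℝ => A * r ^ n) (𝓝[<] 1) (𝓝 A) := by
    simpa using (hc.tendsto 1).mono_left nhdsWithin_le_nhds
  exact le_of_tendsto hlim (eventually_of_mem (Ioo_mem_nhdsLT zero_lt_one) h)

/-- If `g` is in the Carathéodory class `P` (analytic on the unit disk with
`g(0) = 1` and `Re g > 0`, with Taylor coefficients `p`), and `1 ≤ k ≤ n - 1`,
then `|p n - (1/2) p k p (n-k)| + (1/2) |p k p (n-k)| ≤ 2`. -/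
theorem caratheodory_half_inequality (g : ℂ → ℂ) (p : ℕ → ℂ)
    (hp0 : p 0 = 1)
    (hsum : ∀ z ∈ ball (0 : ℂ) 1, HasSum (fun n : ℕ => p n * z ^ n) (g z))
    (hre : ∀ z ∈ ball (0 : ℂ) 1, 0 < (g z).re)
    (n k : ℕ) (hk : 1 ≤ k) (hkn : k ≤ n - 1) :
    ‖p n - (1 / 2 : ℂ) * (p k * p (n - k))‖ +
      (1 / 2 : ℝ) * ‖p k * p (n - k)‖ ≤ 2 := by
  obtain ⟨l, rfl⟩ : ∃ l, n = k + l := ⟨n - k, by omega⟩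
  rw [Nat.add_sub_cancel_left]
  exact le_of_forall_mul_pow_le (k + l) fun r hr =>
    norm_sub_half_mul_add_half_norm_mul_mul_pow_le hp0 hsum hre hk (by omega) hr.1.le hr.2
end

section
/- If f belongs to the Hurwitz class ℋ and n ≥ 2, then for every λ ∈ ℂ one has |λ·a_n² − a_{2n−1}| ≤ max{ |λ|/n² , 1/(2n−1) }. -/
open Metric

/-! The estimate only uses the two terms of the Hurwitz series at the indices `n` and `2n - 1`:
with `x = |a_n|`, `y = |a_{2n-1}|` we have `n x + (2n - 1) y ≤ 1`, and for `M` the right-hand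
side, `|λ| x² ≤ M (n x)² ≤ M n x` (as `n x ≤ 1`) and `y ≤ M (2n - 1) y`, so
`|λ a_n² - a_{2n-1}| ≤ |λ| x² + y ≤ M (n x + (2n - 1) y) ≤ M`. -/

theorem add_le_tsum_of_ne {ι α : Type*} [DecidableEq ι] [AddCommMonoid α] [Preorder α]
    [IsOrderedAddMonoid α] [TopologicalSpace α] [OrderClosedTopology α] {g : ι → α}
    (hs : Summable g) (hg : ∀ k, 0 ≤ g k) {i j : ι} (hij : i ≠ j) : g i + g j ≤ ∑' k, g k := by
  rw [← Finset.sum_pair hij]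
  exact hs.sum_le_tsum _ fun k _ => hg k

theorem mul_sq_add_le_max_of_mul_add_mul_le_one {L x y p q : ℝ} (hx : 0 ≤ x)
    (hy : 0 ≤ y) (hp : 0 < p) (hq : 0 < q) (hxy : p * x + q * y ≤ 1) :
    L * x ^ 2 + y ≤ max (L / p ^ 2) (1 / q) := by
  set M := max (L / p ^ 2) (1 / q)
  have hM : 0 ≤ M := (one_div_pos.mpr hq).le.trans (le_max_right _ _)
  have hLM : L ≤ M * p ^ 2 := (div_le_iff₀ (by positivity)).mp (le_max_left _ _)
  have hqM : 1 ≤ M * q := (div_le_iff₀ hq).mp (le_max_right _ _)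
  have hpx : p * x ≤ 1 := by nlinarith [mul_nonneg hq.le hy]
  have hLx : L * x ^ 2 ≤ M * (p * x) := calc
    L * x ^ 2 ≤ M * p ^ 2 * x ^ 2 := mul_le_mul_of_nonneg_right hLM (sq_nonneg x)
    _ = M * (p * x) * (p * x) := by ring
    _ ≤ M * (p * x) := mul_le_of_le_one_right (by positivity) hpx
  have hyM : y ≤ M * q * y := le_mul_of_one_le_left hy hqM
  calc L * x ^ 2 + y ≤ M * (p * x) + M * q * y := add_le_add hLx hyM
    _ = M * (p * x + q * y) := by ring
    _ ≤ M := mul_le_of_le_one_right hM hxy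

theorem hurwitz_zalcman_equal_indices_general (a : ℕ → ℂ)
    (hs : Summable fun n : ℕ => ((n + 2 : ℕ) : ℝ) * ‖a (n + 2)‖)
    (hH : ∑' n : ℕ, ((n + 2 : ℕ) : ℝ) * ‖a (n + 2)‖ ≤ 1)
    (n : ℕ) (hn : 2 ≤ n) :
    ∀ lam : ℂ, ‖lam * (a n) ^ 2 - a (2 * n - 1)‖ ≤
      max (‖lam‖ / (n : ℝ) ^ 2) (1 / ((2 * n - 1 : ℕ) : ℝ)) := by
  intro lam
  have hpair : (n : ℝ) * ‖a n‖ + ((2 * n - 1 : ℕ) : ℝ) * ‖a (2 * n - 1)‖ ≤ 1 := by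
    have h := (add_le_tsum_of_ne hs (fun k => by positivity)
      (show n - 2 ≠ 2 * n - 3 by omega)).trans hH
    rwa [show n - 2 + 2 = n by omega, show 2 * n - 3 + 2 = 2 * n - 1 by omega] at h
  calc ‖lam * (a n) ^ 2 - a (2 * n - 1)‖
      ≤ ‖lam‖ * ‖a n‖ ^ 2 + ‖a (2 * n - 1)‖ := by
        rw [← norm_pow, ← norm_mul]
        exact norm_sub_le _ _
    _ ≤ _ := mul_sq_add_le_max_of_mul_add_mul_le_one (norm_nonneg _) (norm_nonneg _)
        (by positivity) (by norm_cast; omega) hpair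

/-- If `f` is in the Hurwitz class `ℋ` (analytic on the unit disk,
`f(z) = z + Σ_{n≥2} a_n z^n` with `Σ_{n≥2} n |a_n| ≤ 1`) and `n ≥ 2`, then
`|λ a_n² - a_{2n-1}| ≤ max (|λ|/n²) (1/(2n-1))` for every `λ : ℂ`. -/
theorem hurwitz_zalcman_equal_indices (f : ℂ → ℂ) (a : ℕ → ℂ)
    (ha0 : a 0 = 0) (ha1 : a 1 = 1)
    (hsum : ∀ z ∈ ball (0 : ℂ) 1, HasSum (fun n : ℕ => a n * z ^ n) (f z))
    (hs : Summable fun n : ℕ => ((n + 2 : ℕ) : ℝ) * ‖a (n + 2)‖)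
    (hH : ∑' n : ℕ, ((n + 2 : ℕ) : ℝ) * ‖a (n + 2)‖ ≤ 1)
    (n : ℕ) (hn : 2 ≤ n) :
    ∀ lam : ℂ, ‖lam * (a n) ^ 2 - a (2 * n - 1)‖ ≤
      max (‖lam‖ / (n : ℝ) ^ 2) (1 / ((2 * n - 1 : ℕ) : ℝ)) :=
  hurwitz_zalcman_equal_indices_general a hs hH n hn
end

section
/- If f belongs to the Hurwitz class ℋ and m, n ≥ 2 are distinct integers, then 4mn·|a_m·a_n| + (m+n−1)·|a_{m+n−1}| ≤ 1. -/
open Metric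

/-! The indices `m`, `n`, `m + n - 1` are pairwise distinct, so with `x = m‖a_m‖`, `y = n‖a_n‖`,
`z = (m+n-1)‖a_{m+n-1}‖` the Hurwitz condition gives `x + y + z ≤ 1`; then
`4xy ≤ (x + y)² ≤ x + y ≤ 1 - z`. -/

theorem four_mul_mul_add_le_one_of_add_add_le_one {x y z : ℝ} (hx : 0 ≤ x) (hy : 0 ≤ y)
    (hz : 0 ≤ z) (h : x + y + z ≤ 1) : 4 * x * y + z ≤ 1 := by
  have hxy : x + y ≤ 1 := by linarith
  calc 4 * x * y + z ≤ (x + y) ^ 2 + z := by nlinarith [sq_nonneg (x - y)]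
    _ ≤ (x + y) * 1 + z := by rw [sq]; gcongr
    _ ≤ 1 := by linarith

theorem add_add_le_tsum_of_nonneg {ι : Type*} {f : ι → ℝ} (hf : Summable f) (h0 : ∀ i, 0 ≤ f i)
    {i j k : ι} (hij : i ≠ j) (hik : i ≠ k) (hjk : j ≠ k) :
    f i + f j + f k ≤ ∑' l, f l := by
  classical
  calc f i + f j + f k = ∑ l ∈ {i, j, k}, f l := by
        rw [Finset.sum_insert (by simp [hij, hik]), Finset.sum_pair hjk, add_assoc]
    _ ≤ ∑' l, f l := hf.sum_le_tsum _ fun l _ => h0 l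

theorem weighted_coeff_norm_add_add_le_one (a : ℕ → ℂ)
    (hs : Summable fun n : ℕ => ((n + 2 : ℕ) : ℝ) * ‖a (n + 2)‖)
    (hH : ∑' n : ℕ, ((n + 2 : ℕ) : ℝ) * ‖a (n + 2)‖ ≤ 1)
    {i j k : ℕ} (hi : 2 ≤ i) (hj : 2 ≤ j) (hk : 2 ≤ k) (hij : i ≠ j) (hik : i ≠ k) (hjk : j ≠ k) :
    (i : ℝ) * ‖a i‖ + (j : ℝ) * ‖a j‖ + (k : ℝ) * ‖a k‖ ≤ 1 := by
  obtain ⟨i, rfl⟩ := Nat.exists_eq_add_of_le' hi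
  obtain ⟨j, rfl⟩ := Nat.exists_eq_add_of_le' hj
  obtain ⟨k, rfl⟩ := Nat.exists_eq_add_of_le' hk
  exact (add_add_le_tsum_of_nonneg hs (fun _ => by positivity)
    (by omega) (by omega) (by omega)).trans hH

theorem hurwitz_distinct_coeff_ineq_general (a : ℕ → ℂ)
    (hs : Summable fun n : ℕ => ((n + 2 : ℕ) : ℝ) * ‖a (n + 2)‖)
    (hH : ∑' n : ℕ, ((n + 2 : ℕ) : ℝ) * ‖a (n + 2)‖ ≤ 1)
    (m n : ℕ) (hm : 2 ≤ m) (hn : 2 ≤ n) (hmn : m ≠ n) :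
    (4 * m * n : ℝ) * ‖a m * a n‖ +
      ((m + n - 1 : ℕ) : ℝ) * ‖a (m + n - 1)‖ ≤ 1 := by
  have h := weighted_coeff_norm_add_add_le_one a hs hH hm hn
    (show 2 ≤ m + n - 1 by omega) hmn (by omega) (by omega)
  have key := four_mul_mul_add_le_one_of_add_add_le_one
    (by positivity : 0 ≤ (m : ℝ) * ‖a m‖) (by positivity : 0 ≤ (n : ℝ) * ‖a n‖) (by positivity) h
  calc (4 * m * n : ℝ) * ‖a m * a n‖ + ((m + n - 1 : ℕ) : ℝ) * ‖a (m + n - 1)‖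
      = 4 * (m * ‖a m‖) * (n * ‖a n‖) + ((m + n - 1 : ℕ) : ℝ) * ‖a (m + n - 1)‖ := by
        rw [norm_mul]; ring
    _ ≤ 1 := key

/-- If `f` is in the Hurwitz class `ℋ` (analytic on the unit disk,
`f(z) = z + Σ_{n≥2} a_n z^n` with `Σ_{n≥2} n |a_n| ≤ 1`) and `m ≠ n`, `m, n ≥ 2`,
then `4mn |a_m a_n| + (m+n-1) |a_{m+n-1}| ≤ 1`. -/
theorem hurwitz_distinct_coeff_ineq (f : ℂ → ℂ) (a : ℕ → ℂ)
    (ha0 : a 0 = 0) (ha1 : a 1 = 1)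
    (hsum : ∀ z ∈ ball (0 : ℂ) 1, HasSum (fun n : ℕ => a n * z ^ n) (f z))
    (hs : Summable fun n : ℕ => ((n + 2 : ℕ) : ℝ) * ‖a (n + 2)‖)
    (hH : ∑' n : ℕ, ((n + 2 : ℕ) : ℝ) * ‖a (n + 2)‖ ≤ 1)
    (m n : ℕ) (hm : 2 ≤ m) (hn : 2 ≤ n) (hmn : m ≠ n) :
    (4 * m * n : ℝ) * ‖a m * a n‖ +
      ((m + n - 1 : ℕ) : ℝ) * ‖a (m + n - 1)‖ ≤ 1 :=
  hurwitz_distinct_coeff_ineq_general a hs hH m n hm hn hmn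
end

section
/- If f belongs to the Hurwitz class ℋ and m, n ≥ 2 are distinct integers, then for every λ ∈ ℂ one has |λ·a_m·a_n − a_{m+n−1}| ≤ max{ |λ|/(4mn) , 1/(m+n−1) }. -/
open Metric

/-!
Only three coefficients enter, and the Hurwitz condition bounds their weighted sum:
`m‖a_m‖ + n‖a_n‖ + (m+n-1)‖a_{m+n-1}‖ ≤ 1` because the indices are distinct. Putting
`w = (m+n-1)‖a_{m+n-1}‖`, AM-GM gives `4mn‖a_m‖‖a_n‖ ≤ (1 - w)²`, so the left-hand side is at most
`A(1 - w)² + Bw` with `A = |λ|/(4mn)`, `B = 1/(m+n-1)`, and this is at most `max A B` for `w ∈ [0, 1]`.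
-/

lemma mul_one_sub_sq_add_mul_le_max {A B w : ℝ} (hA : 0 ≤ A) (hw₀ : 0 ≤ w) (hw₁ : w ≤ 1) :
    A * (1 - w) ^ 2 + B * w ≤ max A B := by
  have hsq : (1 - w) ^ 2 ≤ 1 - w := by nlinarith
  calc A * (1 - w) ^ 2 + B * w ≤ A * (1 - w) + B * w := by gcongr
    _ ≤ max A B * (1 - w) + max A B * w := by
        gcongr
        exacts [le_max_left A B, le_max_right A B]
    _ = max A B := by ring

lemma mul_mul_add_le_max_of_add_add_le_one {L x y z M N p : ℝ} (hL : 0 ≤ L) (hx : 0 ≤ x)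
    (hy : 0 ≤ y) (hz : 0 ≤ z) (hM : 0 < M) (hN : 0 < N) (hp : 0 < p)
    (h : M * x + N * y + p * z ≤ 1) :
    L * (x * y) + z ≤ max (L / (4 * M * N)) (1 / p) := by
  have hw₀ : 0 ≤ p * z := by positivity
  have hsum : 0 ≤ M * x + N * y := by positivity
  have amgm : 4 * M * N * (x * y) ≤ (1 - p * z) ^ 2 := by
    nlinarith [sq_nonneg (M * x - N * y)]
  calc L * (x * y) + z
      = L / (4 * M * N) * (4 * M * N * (x * y)) + 1 / p * (p * z) := by
        field_simp
    _ ≤ L / (4 * M * N) * (1 - p * z) ^ 2 + 1 / p * (p * z) := by gcongr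
    _ ≤ max (L / (4 * M * N)) (1 / p) :=
        mul_one_sub_sq_add_mul_le_max (by positivity) hw₀ (by linarith)

lemma sum_mul_norm_le_one_of_hurwitz {E : Type*} [SeminormedAddCommGroup E] {a : ℕ → E}
    (hs : Summable fun n : ℕ => ((n + 2 : ℕ) : ℝ) * ‖a (n + 2)‖)
    (hH : ∑' n : ℕ, ((n + 2 : ℕ) : ℝ) * ‖a (n + 2)‖ ≤ 1)
    {s : Finset ℕ} (h2 : ∀ k ∈ s, 2 ≤ k) :
    ∑ k ∈ s, (k : ℝ) * ‖a k‖ ≤ 1 := by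
  have hinj : Set.InjOn (· - 2) (s : Set ℕ) := fun i hi j hj hij => by
    have := h2 i hi; have := h2 j hj; simp only at hij; omega
  have hshift : ∑ k ∈ s.image (· - 2), ((k + 2 : ℕ) : ℝ) * ‖a (k + 2)‖
      = ∑ k ∈ s, (k : ℝ) * ‖a k‖ := by
    rw [Finset.sum_image hinj]
    refine Finset.sum_congr rfl fun k hk => ?_
    rw [Nat.sub_add_cancel (h2 k hk)]
  rw [← hshift]
  exact (hs.sum_le_tsum _ fun k _ => by positivity).trans hH

lemma norm_mul_mul_sub_le {E : Type*} [NormedRing E] (c x y z : E) :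
    ‖c * (x * y) - z‖ ≤ ‖c‖ * (‖x‖ * ‖y‖) + ‖z‖ :=
  calc ‖c * (x * y) - z‖ ≤ ‖c * (x * y)‖ + ‖z‖ := norm_sub_le _ _
    _ ≤ ‖c‖ * (‖x‖ * ‖y‖) + ‖z‖ := by
        gcongr
        exact (norm_mul_le _ _).trans (by gcongr; exact norm_mul_le _ _)

theorem hurwitz_zalcman_distinct_indices_general (a : ℕ → ℂ)
    (hs : Summable fun n : ℕ => ((n + 2 : ℕ) : ℝ) * ‖a (n + 2)‖)
    (hH : ∑' n : ℕ, ((n + 2 : ℕ) : ℝ) * ‖a (n + 2)‖ ≤ 1)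
    (m n : ℕ) (hm : 2 ≤ m) (hn : 2 ≤ n) (hmn : m ≠ n) :
    ∀ lam : ℂ, ‖lam * (a m * a n) - a (m + n - 1)‖ ≤
      max (‖lam‖ / (4 * m * n : ℝ)) (1 / ((m + n - 1 : ℕ) : ℝ)) := by
  intro lam
  have hcoeff :
      (m : ℝ) * ‖a m‖ + n * ‖a n‖ + ((m + n - 1 : ℕ) : ℝ) * ‖a (m + n - 1)‖ ≤ 1 := by
    have h := sum_mul_norm_le_one_of_hurwitz hs hH (s := {m, n, m + n - 1})
      (by simp only [Finset.mem_insert, Finset.mem_singleton]; omega)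
    rwa [Finset.sum_insert (by simp only [Finset.mem_insert, Finset.mem_singleton]; omega),
      Finset.sum_pair (by omega), ← add_assoc] at h
  have hp : (0 : ℝ) < ((m + n - 1 : ℕ) : ℝ) := by norm_cast; omega
  exact (norm_mul_mul_sub_le _ _ _ _).trans <|
    mul_mul_add_le_max_of_add_add_le_one (norm_nonneg _) (norm_nonneg _) (norm_nonneg _)
      (norm_nonneg _) (by positivity) (by positivity) hp hcoeff

/-- If `f` is in the Hurwitz class `ℋ` (analytic on the unit disk,
`f(z) = z + Σ_{n≥2} a_n z^n` with `Σ_{n≥2} n |a_n| ≤ 1`) and `m ≠ n`, `m, n ≥ 2`,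
then `|λ a_m a_n - a_{m+n-1}| ≤ max (|λ|/(4mn)) (1/(m+n-1))` for every `λ : ℂ`. -/
theorem hurwitz_zalcman_distinct_indices (f : ℂ → ℂ) (a : ℕ → ℂ)
    (ha0 : a 0 = 0) (ha1 : a 1 = 1)
    (hsum : ∀ z ∈ ball (0 : ℂ) 1, HasSum (fun n : ℕ => a n * z ^ n) (f z))
    (hs : Summable fun n : ℕ => ((n + 2 : ℕ) : ℝ) * ‖a (n + 2)‖)
    (hH : ∑' n : ℕ, ((n + 2 : ℕ) : ℝ) * ‖a (n + 2)‖ ≤ 1)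
    (m n : ℕ) (hm : 2 ≤ m) (hn : 2 ≤ n) (hmn : m ≠ n) :
    ∀ lam : ℂ, ‖lam * (a m * a n) - a (m + n - 1)‖ ≤
      max (‖lam‖ / (4 * m * n : ℝ)) (1 / ((m + n - 1 : ℕ) : ℝ)) :=
  hurwitz_zalcman_distinct_indices_general a hs hH m n hm hn hmn
end

section
/- If f belongs to the closed convex hull of the convex functions (i.e. f is analytic on 𝔻 with f(0) = 0, f'(0) = 1 and Re(f(z)/z) > 1/2 for all z ∈ 𝔻 with z ≠ 0) and m, n ≥ 2, then for every λ ∈ ℂ one has |λ·a_m·a_n − a_{m+n−1}| ≤ max{ 1 , |1 − λ| }. -/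
/-!
For `0 < r < 1` the function `θ ↦ 2 Re (f(r e^{iθ}) / (r e^{iθ})) - 1` is nonnegative, so divided
by `2π` it is the density of a probability measure `μ_r` on `[0, 2π]` whose trigonometric moments
`∫ e^{-ikθ} dμ_r` are `a_{k+1} r^k` for `k ≥ 1`. For unimodular functions `u, v` on a probability
space, the covariance `∫ u v - ∫ u ∫ v = ∫ (u - ∫ u)(v - ∫ v)` is bounded by
`√((1 - |∫ u|²)(1 - |∫ v|²)) ≤ 1 - |∫ u| |∫ v|`. Applied to `u = e^{-i(m-1)θ}`, `v = e^{-i(n-1)θ}`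
this gives `|a_{m+n-1} - a_m a_n| ≤ 1 - |a_m| |a_n|` (after `r → 1`), and the triangle inequality
for `λ a_m a_n - a_{m+n-1} = (λ - 1) a_m a_n - (a_{m+n-1} - a_m a_n)` finishes the proof.
-/

open Metric Complex ComplexConjugate MeasureTheory Filter Topology
open scoped Real

section Covariance

variable {Ω : Type*} [MeasurableSpace Ω] {μ : Measure Ω} [IsProbabilityMeasure μ]

lemma two_mul_le_mul_sq_add_sq_div {a b t : ℝ} (ht : 0 < t) :
    2 * (a * b) ≤ t * a ^ 2 + b ^ 2 / t := by
  have e : t * a ^ 2 + b ^ 2 / t - 2 * (a * b) = (t * a - b) ^ 2 / t := by field_simp; ring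
  rw [← sub_nonneg, e]
  positivity

lemma le_one_sub_mul_of_forall_pos {x y D : ℝ} (hx0 : 0 ≤ x) (hx1 : x ≤ 1) (hy0 : 0 ≤ y)
    (hy1 : y ≤ 1) (h : ∀ t > 0, 2 * D ≤ t * (1 - x ^ 2) + (1 - y ^ 2) / t) :
    D ≤ 1 - x * y := by
  rcases hx1.lt_or_eq with hx | rfl
  · -- not the optimal `t = √((1 - y²) / (1 - x²))`, but it already yields `1 - x y`, without roots
    have hxy : 0 < 1 - x * y := by nlinarith
    have hx2 : 0 < 1 - x ^ 2 := by nlinarith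
    have hbound : (1 - y ^ 2) / ((1 - x * y) / (1 - x ^ 2)) ≤ 1 - x * y := by
      rw [div_div_eq_mul_div, div_le_iff₀ hxy]
      nlinarith [sq_nonneg (x - y)]
    have := h _ (div_pos hxy hx2)
    rw [div_mul_cancel₀ _ hx2.ne'] at this
    linarith
  · have hy : 0 < (1 + y) / 2 := by linarith
    have := h _ hy
    rw [show (1 - y ^ 2) / ((1 + y) / 2) = 2 * (1 - y) by field_simp; ring] at this
    linarith

lemma norm_mul_mul_sub_le_max {x y z : ℂ} (lam : ℂ) (hx : ‖x‖ ≤ 1) (hy : ‖y‖ ≤ 1)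
    (hz : ‖z - x * y‖ ≤ 1 - ‖x‖ * ‖y‖) : ‖lam * (x * y) - z‖ ≤ max 1 ‖1 - lam‖ := by
  have hs0 : 0 ≤ ‖x‖ * ‖y‖ := by positivity
  have hs1 : ‖x‖ * ‖y‖ ≤ 1 := mul_le_one₀ hx (norm_nonneg _) hy
  calc ‖lam * (x * y) - z‖ = ‖(1 - lam) * (x * y) + (z - x * y)‖ := by
        rw [← norm_neg]; ring_nf
    _ ≤ ‖1 - lam‖ * (‖x‖ * ‖y‖) + (1 - ‖x‖ * ‖y‖) := by
      grw [norm_add_le, norm_mul, norm_mul, hz]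
    _ ≤ max 1 ‖1 - lam‖ * (‖x‖ * ‖y‖) + max 1 ‖1 - lam‖ * (1 - ‖x‖ * ‖y‖) := by
      exact add_le_add (mul_le_mul_of_nonneg_right (le_max_right _ _) hs0)
        (le_mul_of_one_le_left (by linarith) (le_max_left _ _))
    _ = max 1 ‖1 - lam‖ := by ring

lemma norm_integral_le_one {u : Ω → ℂ} (hu : ∀ᵐ ω ∂μ, ‖u ω‖ = 1) : ‖∫ ω, u ω ∂μ‖ ≤ 1 := by
  simpa using norm_integral_le_of_norm_le_const (μ := μ) (hu.mono fun _ h => h.le)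

lemma integrable_sq_norm_sub_const {u : Ω → ℂ} (hu : AEStronglyMeasurable u μ)
    (hu1 : ∀ᵐ ω ∂μ, ‖u ω‖ = 1) (x : ℂ) : Integrable (fun ω => ‖u ω - x‖ ^ 2) μ :=
  (((memLp_top_of_bound hu 1 (hu1.mono fun _ h => h.le)).sub (memLp_const x)).mono_exponent
    le_top).integrable_norm_pow (p := 2) two_ne_zero

lemma integral_sq_norm_sub_integral {u : Ω → ℂ} (hu : AEStronglyMeasurable u μ)
    (hu1 : ∀ᵐ ω ∂μ, ‖u ω‖ = 1) :
    ∫ ω, ‖u ω - ∫ ω', u ω' ∂μ‖ ^ 2 ∂μ = 1 - ‖∫ ω, u ω ∂μ‖ ^ 2 := by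
  set x := ∫ ω, u ω ∂μ
  have hint : Integrable u μ := .of_bound hu 1 (hu1.mono fun _ h => h.le)
  have hpt : ∀ᵐ ω ∂μ, ‖u ω - x‖ ^ 2 = 1 + ‖x‖ ^ 2 - 2 * (u ω * conj x).re :=
    hu1.mono fun ω h => by
      rw [Complex.sq_norm, normSq_sub, ← Complex.sq_norm, ← Complex.sq_norm, h]
      ring
  have hint_re : Integrable (fun ω => 2 * (u ω * conj x).re) μ :=
    (hint.mul_const _).re.const_mul 2
  have hintegral_re : ∫ ω, (u ω * conj x).re ∂μ = (x * conj x).re := by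
    simpa only [RCLike.re_to_complex, integral_mul_const] using
      integral_re (hint.mul_const (conj x))
  rw [integral_congr_ae hpt, integral_sub (integrable_const _) hint_re,
    integral_const, integral_const_mul, hintegral_re]
  simp only [probReal_univ, one_smul, mul_conj, normSq_eq_norm_sq, ofReal_re]
  ring

lemma norm_integral_mul_sub_le {u v : Ω → ℂ} (hu : AEStronglyMeasurable u μ)
    (hv : AEStronglyMeasurable v μ) (hu1 : ∀ᵐ ω ∂μ, ‖u ω‖ = 1) (hv1 : ∀ᵐ ω ∂μ, ‖v ω‖ = 1) :
    ‖∫ ω, u ω * v ω ∂μ - (∫ ω, u ω ∂μ) * ∫ ω, v ω ∂μ‖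
      ≤ 1 - ‖∫ ω, u ω ∂μ‖ * ‖∫ ω, v ω ∂μ‖ := by
  set x := ∫ ω, u ω ∂μ
  set y := ∫ ω, v ω ∂μ
  have hui : Integrable u μ := .of_bound hu 1 (hu1.mono fun _ h => h.le)
  have hvi : Integrable v μ := .of_bound hv 1 (hv1.mono fun _ h => h.le)
  have huvi : Integrable (fun ω => u ω * v ω) μ := .of_bound (hu.mul hv) 1 <| by
    filter_upwards [hu1, hv1] with ω h1 h2
    simp [h1, h2]
  have hcov : ∫ ω, (u ω - x) * (v ω - y) ∂μ = ∫ ω, u ω * v ω ∂μ - x * y := by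
    have e : (fun ω => (u ω - x) * (v ω - y))
        = fun ω => (u ω * v ω - x * v ω) - (u ω * y - x * y) := by ext; ring
    have h1 : Integrable (fun ω => u ω * v ω - x * v ω) μ := huvi.sub (hvi.const_mul x)
    have h2 : Integrable (fun ω => u ω * y - x * y) μ := (hui.mul_const y).sub (integrable_const _)
    rw [e, integral_sub h1 h2, integral_sub huvi (hvi.const_mul x),
      integral_sub (hui.mul_const y) (integrable_const _),
      integral_const_mul, integral_mul_const, integral_const]
    simp only [probReal_univ, one_smul]
    ring
  refine le_one_sub_mul_of_forall_pos (norm_nonneg _) (norm_integral_le_one hu1) (norm_nonneg _)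
    (norm_integral_le_one hv1) fun t ht => ?_
  have hUi := integrable_sq_norm_sub_const hu hu1 x
  have hVi := integrable_sq_norm_sub_const hv hv1 y
  calc 2 * ‖∫ ω, u ω * v ω ∂μ - x * y‖
      ≤ 2 * ∫ ω, ‖u ω - x‖ * ‖v ω - y‖ ∂μ := by
        rw [← hcov]
        gcongr
        exact (norm_integral_le_integral_norm _).trans_eq (by simp only [norm_mul])
    _ ≤ ∫ ω, (t * ‖u ω - x‖ ^ 2 + ‖v ω - y‖ ^ 2 / t) ∂μ := by
        rw [← integral_const_mul]
        exact integral_mono_of_nonneg (ae_of_all _ fun ω => by positivity)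
          ((hUi.const_mul t).add (hVi.div_const t))
          (ae_of_all _ fun ω => two_mul_le_mul_sq_add_sq_div ht)
    _ = t * (1 - ‖x‖ ^ 2) + (1 - ‖y‖ ^ 2) / t := by
        rw [integral_add (hUi.const_mul t) (hVi.div_const t), integral_const_mul, integral_div,
          integral_sq_norm_sub_integral hu hu1, integral_sq_norm_sub_integral hv hv1]

lemma norm_mul_integral_mul_integral_sub_le_max {u v : Ω → ℂ} (hu : AEStronglyMeasurable u μ)
    (hv : AEStronglyMeasurable v μ) (hu1 : ∀ᵐ ω ∂μ, ‖u ω‖ = 1) (hv1 : ∀ᵐ ω ∂μ, ‖v ω‖ = 1)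
    (lam : ℂ) :
    ‖lam * ((∫ ω, u ω ∂μ) * ∫ ω, v ω ∂μ) - ∫ ω, u ω * v ω ∂μ‖ ≤ max 1 ‖1 - lam‖ :=
  norm_mul_mul_sub_le_max lam (norm_integral_le_one hu1) (norm_integral_le_one hv1)
    (norm_integral_mul_sub_le hu hv hu1 hv1)

end Covariance

noncomputable def cis (k : ℤ) (θ : ℝ) : ℂ := exp (k * θ * I)

lemma continuous_cis (k : ℤ) : Continuous (cis k) := by
  unfold cis; fun_prop

lemma norm_cis (k : ℤ) (θ : ℝ) : ‖cis k θ‖ = 1 := by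
  simpa [cis, mul_assoc] using norm_exp_ofReal_mul_I (k * θ)

lemma cis_add (j k : ℤ) (θ : ℝ) : cis (j + k) θ = cis j θ * cis k θ := by
  rw [cis, cis, cis, ← exp_add]
  push_cast
  ring_nf

lemma conj_cis (k : ℤ) (θ : ℝ) : conj (cis k θ) = cis (-k) θ := by
  rw [cis, cis, ← exp_conj]
  simp

lemma cis_zero (θ : ℝ) : cis 0 θ = 1 := by simp [cis]

lemma ofReal_mul_exp_mul_I_pow (r θ : ℝ) (n : ℕ) :
    ((r : ℂ) * exp (θ * I)) ^ n = (r : ℂ) ^ n * cis n θ := by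
  rw [mul_pow, ← exp_nat_mul, cis]
  push_cast
  ring_nf

lemma integral_cis (k : ℤ) :
    ∫ θ in (0 : ℝ)..2 * π, cis k θ = if k = 0 then (2 * π : ℂ) else 0 := by
  split_ifs with hk
  · simp [hk, cis_zero]
  · have hc : (k : ℂ) * I ≠ 0 := by simp [hk]
    have h2π : exp (k * I * (2 * π : ℝ)) = 1 := by
      rw [← exp_int_mul_two_pi_mul_I k]; push_cast; ring_nf
    simp only [cis, show ∀ θ : ℝ, (k : ℂ) * θ * I = k * I * θ from fun θ => by ring]
    rw [integral_exp_mul_complex hc, h2π]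
    simp

section Fourier

variable {c : ℕ → ℂ}

lemma continuous_tsum_mul_cis (hc : Summable fun j => ‖c j‖) :
    Continuous fun θ => ∑' j, c j * cis j θ :=
  continuous_tsum (fun j => continuous_const.mul (continuous_cis j)) hc
    fun j θ => by simp [norm_cis]

lemma summable_mul_cis (hc : Summable fun j => ‖c j‖) (θ : ℝ) :
    Summable fun j : ℕ => c j * cis j θ :=
  .of_norm_bounded hc fun j => by simp [norm_cis]

lemma hasSum_integral_tsum_mul_cis (hc : Summable fun j => ‖c j‖) (d : ℤ) :
    HasSum (fun j : ℕ => c j * ∫ θ in (0 : ℝ)..2 * π, cis (j + d) θ)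
      (∫ θ in (0 : ℝ)..2 * π, (∑' j, c j * cis j θ) * cis d θ) := by
  have hterm : ∀ j : ℕ, ∫ θ in (0 : ℝ)..2 * π, c j * cis j θ * cis d θ
      = c j * ∫ θ in (0 : ℝ)..2 * π, cis (j + d) θ := fun j => by
    simp only [cis_add, mul_assoc, intervalIntegral.integral_const_mul]
  simp only [← hterm]
  exact intervalIntegral.hasSum_integral_of_dominated_convergence
    (F := fun (j : ℕ) θ => c j * cis j θ * cis d θ) (fun j _ => ‖c j‖)
    (fun j => ((continuous_const.mul (continuous_cis j)).mul
      (continuous_cis d)).aestronglyMeasurable)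
    (fun j => ae_of_all _ fun θ _ => by simp [norm_cis])
    (ae_of_all _ fun _ _ => hc) intervalIntegrable_const
    (ae_of_all _ fun θ _ => (summable_mul_cis hc θ).hasSum.mul_right _)

lemma integral_tsum_mul_cis_neg (hc : Summable fun j => ‖c j‖) (k : ℕ) :
    ∫ θ in (0 : ℝ)..2 * π, (∑' j, c j * cis j θ) * cis (-k) θ = 2 * π * c k := by
  rw [← (hasSum_integral_tsum_mul_cis hc (-k)).tsum_eq, tsum_eq_single k fun j hj => by
    rw [integral_cis, if_neg (by omega), mul_zero]]
  rw [integral_cis, if_pos (by ring), mul_comm]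

lemma integral_tsum_mul_cis {k : ℕ} (hc : Summable fun j => ‖c j‖) (hk : k ≠ 0) :
    ∫ θ in (0 : ℝ)..2 * π, (∑' j, c j * cis j θ) * cis k θ = 0 := by
  refine (hasSum_integral_tsum_mul_cis hc k).unique ?_
  convert hasSum_zero with j
  rw [integral_cis, if_neg (by omega), mul_zero]

end Fourier

lemma exists_isProbabilityMeasure_of_density {w : ℝ → ℝ} {a b : ℝ} (hw : Measurable w)
    (hw0 : ∀ x, 0 ≤ w x) (hab : a ≤ b) (hw1 : ∫ x in a..b, w x = 1) :
    ∃ μ : Measure ℝ, IsProbabilityMeasure μ ∧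
      ∀ g : ℝ → ℂ, ∫ x, g x ∂μ = ∫ x in a..b, (w x : ℂ) * g x := by
  have hwi : IntervalIntegrable w volume a b := by
    by_contra h
    simp [intervalIntegral.integral_undef h] at hw1
  refine ⟨(volume.restrict (Set.Ioc a b)).withDensity fun x => (w x).toNNReal, ⟨?_⟩, fun g => ?_⟩
  · rw [withDensity_apply _ MeasurableSet.univ, Measure.restrict_univ]
    simp only [ENNReal.ofNNReal_toNNReal]
    rw [← ofReal_integral_eq_lintegral_ofReal
      ((intervalIntegrable_iff_integrableOn_Ioc_of_le hab).1 hwi) (ae_of_all _ hw0), ← intervalIntegral.integral_of_le hab, hw1, ENNReal.ofReal_one]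
  · rw [integral_withDensity_eq_integral_smul hw.real_toNNReal, intervalIntegral.integral_of_le hab]
    simp only [NNReal.smul_def, Real.coe_toNNReal _ (hw0 _), real_smul]

lemma exists_isProbabilityMeasure_integral_cis_neg {c : ℕ → ℂ} (hc : Summable fun j => ‖c j‖)
    (hc0 : c 0 = 1) (hre : ∀ θ, 1 / 2 ≤ (∑' j, c j * cis j θ).re) :
    ∃ μ : Measure ℝ, IsProbabilityMeasure μ ∧ ∀ k : ℕ, k ≠ 0 → ∫ θ, cis (-k) θ ∂μ = c k := by
  set S := fun θ => ∑' j, c j * cis j θ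
  have hSc : Continuous S := continuous_tsum_mul_cis hc
  have hπ : (2 * π : ℂ) ≠ 0 := by simp [Real.pi_ne_zero]
  -- `w` is the real part of the Carathéodory function `2 S - 1`, normalised to total mass one
  set w := fun θ => (2 * (S θ).re - 1) / (2 * π)
  have hmoment : ∀ k : ℕ, ∫ θ in (0 : ℝ)..2 * π, (w θ : ℂ) * cis (-k) θ
      = (2 * π * c k + conj (∫ θ in (0 : ℝ)..2 * π, S θ * cis k θ)
          - ∫ θ in (0 : ℝ)..2 * π, cis (-k) θ) / (2 * π) := by
    intro k
    have e : ∀ θ, (w θ : ℂ) * cis (-k) θ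
        = (S θ * cis (-k) θ + conj (S θ * cis k θ) - cis (-k) θ) / (2 * π) := fun θ => by
      simp only [w, map_mul, conj_cis]
      push_cast
      rw [re_eq_add_conj]
      field_simp
    have hint : ∀ d : ℤ, IntervalIntegrable (fun θ => S θ * cis d θ) volume 0 (2 * π) :=
      fun d => (hSc.mul (continuous_cis d)).intervalIntegrable _ _
    have hint' : ∀ d : ℤ, IntervalIntegrable (fun θ => conj (S θ * cis d θ)) volume 0 (2 * π) :=
      fun d => (continuous_conj.comp (hSc.mul (continuous_cis d))).intervalIntegrable _ _
    simp_rw [e]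
    rw [intervalIntegral.integral_div, intervalIntegral.integral_sub
      ((hint _).add (hint' _)) ((continuous_cis _).intervalIntegrable _ _),
      intervalIntegral.integral_add (hint _) (hint' _),
      intervalIntegral.intervalIntegral_conj, integral_tsum_mul_cis_neg hc]
  have hmass : ∫ θ in (0 : ℝ)..2 * π, w θ = 1 := by
    have h := hmoment 0
    have hS := integral_tsum_mul_cis_neg hc 0
    simp only [Nat.cast_zero, neg_zero, cis_zero, mul_one, hc0] at h hS
    rw [hS, intervalIntegral.integral_ofReal, intervalIntegral.integral_const] at h
    simp only [map_mul, map_ofNat, conj_ofReal, sub_zero, real_smul, mul_one, add_sub_cancel_right,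
      ofReal_mul, ofReal_ofNat, div_self hπ] at h
    exact_mod_cast h
  have hw0 : ∀ θ, 0 ≤ w θ := fun θ => div_nonneg (by linarith [hre θ]) (by positivity)
  have hwc : Continuous w := by fun_prop
  obtain ⟨μ, hμ, hμw⟩ :=
    exists_isProbabilityMeasure_of_density hwc.measurable hw0 (by positivity) hmass
  refine ⟨μ, hμ, fun k hk => ?_⟩
  rw [hμw, hmoment, integral_tsum_mul_cis hc hk, map_zero, integral_cis, if_neg (by omega),
    add_zero, sub_zero, mul_div_cancel_left₀ _ hπ]

lemma summable_norm_mul_pow_of_summable {a : ℕ → ℂ} {ρ z : ℂ}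
    (h : Summable fun n => a n * ρ ^ n) (hz : ‖z‖ < ‖ρ‖) : Summable fun n => ‖a n * z ^ n‖ := by
  have hρ : ρ ≠ 0 := by
    rintro rfl
    exact (norm_nonneg z).not_gt (by simpa using hz)
  have hzρ : ‖z / ρ‖ < 1 := by
    rwa [norm_div, div_lt_one (norm_pos_iff.2 hρ)]
  have hbdd : (fun n => a n * ρ ^ n) =O[atTop] fun n => ((n ^ 0 : ℕ) : ℂ) := by
    simpa using h.tendsto_atTop_zero.isBigO_one ℂ
  refine (summable_norm_mul_geometric_of_norm_lt_one' hzρ hbdd).congr fun n => ?_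
  rw [mul_assoc, ← mul_pow, mul_div_cancel₀ _ hρ]

lemma hasSum_coeff_succ_mul_pow {a : ℕ → ℂ} {z s : ℂ} (ha0 : a 0 = 0)
    (h : HasSum (fun n => a n * z ^ n) s) (hz : z ≠ 0) :
    HasSum (fun j => a (j + 1) * z ^ j) (s / z) := by
  have h1 := ((hasSum_nat_add_iff' 1).2 h).div_const z
  simp only [Finset.range_one, Finset.sum_singleton, ha0, zero_mul, sub_zero] at h1
  have e : (fun j => a (j + 1) * z ^ (j + 1) / z) = fun j => a (j + 1) * z ^ j :=
    funext fun j => by rw [pow_succ, ← mul_assoc, mul_div_cancel_right₀ _ hz]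
  rwa [e] at h1

lemma exists_isProbabilityMeasure_integral_cis_neg_eq_coeff {f : ℂ → ℂ} {a : ℕ → ℂ}
    (ha0 : a 0 = 0) (ha1 : a 1 = 1)
    (hsum : ∀ z ∈ ball (0 : ℂ) 1, HasSum (fun n : ℕ => a n * z ^ n) (f z))
    (hre : ∀ z ∈ ball (0 : ℂ) 1, z ≠ 0 → 1 / 2 < (f z / z).re) {r : ℝ} (hr0 : 0 < r)
    (hr1 : r < 1) :
    ∃ μ : Measure ℝ, IsProbabilityMeasure μ ∧
      ∀ k : ℕ, k ≠ 0 → ∫ θ, cis (-k) θ ∂μ = a (k + 1) * r ^ k := by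
  have hdiv : ∀ z ∈ ball (0 : ℂ) 1, z ≠ 0 → HasSum (fun j => a (j + 1) * z ^ j) (f z / z) :=
    fun z hz hz0 => hasSum_coeff_succ_mul_pow ha0 (hsum z hz) hz0
  have hρ : (((1 + r) / 2 : ℝ) : ℂ) ∈ ball (0 : ℂ) 1 := by
    rw [mem_ball_zero_iff, norm_real, Real.norm_of_nonneg (by linarith)]
    linarith
  have hc : Summable fun j => ‖a (j + 1) * (r : ℂ) ^ j‖ := by
    refine summable_norm_mul_pow_of_summable (hdiv _ hρ (by norm_cast; linarith)).summable ?_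
    rw [norm_real, norm_real, Real.norm_of_nonneg hr0.le, Real.norm_of_nonneg (by linarith)]
    linarith
  refine exists_isProbabilityMeasure_integral_cis_neg hc (by simp [ha1]) fun θ => ?_
  set z : ℂ := r * exp (θ * I)
  have hz : z ∈ ball (0 : ℂ) 1 := by
    simpa [z, norm_exp_ofReal_mul_I, abs_of_pos hr0] using hr1
  have hz0 : z ≠ 0 := by simp [z, hr0.ne']
  have hS : ∑' j, a (j + 1) * r ^ j * cis j θ = f z / z := by
    simp_rw [mul_assoc, ← ofReal_mul_exp_mul_I_pow]
    exact (hdiv z hz hz0).tsum_eq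
  rw [hS]
  exact (hre z hz hz0).le

/-- If `f` is in the closed convex hull of the convex univalent functions
(equivalently, `f` is analytic on the unit disk with `f(0) = 0`, `f'(0) = 1` and
`Re (f z / z) > 1/2` for `z ≠ 0` in the disk), with Taylor coefficients `a`, then
for `m, n ≥ 2` and every `λ : ℂ`: `|λ a_m a_n - a_{m+n-1}| ≤ max 1 |1 - λ|`. -/
theorem convexHull_convex_zalcman (f : ℂ → ℂ) (a : ℕ → ℂ)
    (ha0 : a 0 = 0) (ha1 : a 1 = 1)
    (hsum : ∀ z ∈ ball (0 : ℂ) 1, HasSum (fun n : ℕ => a n * z ^ n) (f z))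
    (hre : ∀ z ∈ ball (0 : ℂ) 1, z ≠ 0 → 1 / 2 < (f z / z).re)
    (m n : ℕ) (hm : 2 ≤ m) (hn : 2 ≤ n) :
    ∀ lam : ℂ, ‖lam * (a m * a n) - a (m + n - 1)‖ ≤
      max 1 ‖1 - lam‖ := by
  intro lam
  obtain ⟨M, rfl⟩ : ∃ M, m = M + 1 := ⟨m - 1, by omega⟩
  obtain ⟨N, rfl⟩ : ∃ N, n = N + 1 := ⟨n - 1, by omega⟩
  rw [show M + 1 + (N + 1) - 1 = M + N + 1 by omega]
  set F : ℝ → ℝ := fun r =>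
    ‖lam * (a (M + 1) * r ^ M * (a (N + 1) * r ^ N)) - a (M + N + 1) * r ^ (M + N)‖
  have hF : ∀ r ∈ Set.Ioo (0 : ℝ) 1, F r ≤ max 1 ‖1 - lam‖ := by
    rintro r ⟨hr0, hr1⟩
    obtain ⟨μ, hμ, hmom⟩ :=
      exists_isProbabilityMeasure_integral_cis_neg_eq_coeff ha0 ha1 hsum hre hr0 hr1
    have h := norm_mul_integral_mul_integral_sub_le_max (μ := μ)
      (continuous_cis (-M)).aestronglyMeasurable (continuous_cis (-N)).aestronglyMeasurable
      (ae_of_all _ (norm_cis _)) (ae_of_all _ (norm_cis _)) lam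
    simp only [← cis_add, ← neg_add] at h
    rwa [hmom M (by omega), hmom N (by omega), ← Nat.cast_add, hmom (M + N) (by omega)] at h
  have hlim : Tendsto F (𝓝[<] 1) (𝓝 (F 1)) :=
    (Continuous.tendsto (by fun_prop) 1).mono_left nhdsWithin_le_nhds
  simpa [F] using le_of_tendsto hlim (eventually_of_mem (Ioo_mem_nhdsLT zero_lt_one) hF)
end

section
/- Let α < 1 and set A_n = (1/n!)·∏_{k=2}^{n} (k − 2α) for n ≥ 1 (so A_1 = 1). Suppose g ∈ P has Taylor coefficients p_j and the complex numbers a_n (n ≥ 2) satisfy a_n = (A_n/2)·p_{n−1} (this holds for the Taylor coefficients of every f in the closed convex hull of the class C(α) of convex functions of order α, via its Herglotz representation). Then for all m, n ≥ 2: |a_m·a_n/(A_m·A_n) − a_{m+n−1}/A_{m+n−1}| + |a_m·a_n|/(A_m·A_n) ≤ 1. -/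
/-!
Put `u = p k / 2`, `v = p l / 2`, `w = p (k + l) / 2` with `k = m - 1`, `l = n - 1`; after cancelling
the `A`'s the claim reads `‖u v - w‖ + ‖u‖ ‖v‖ ≤ 1`. For `r < 1` the density
`ρ θ = Re g (r e^{iθ})` is positive, has mass `2π`, and `∫ ρ e^{-ijθ} dθ = 2π (p j r^j / 2)` for
`j ≥ 1`. Cauchy–Schwarz in `L²(ρ dθ)` applied to `e^{-ikθ} - u_r` and `e^{-ilθ} - v_r` gives
`‖w_r - u_r v_r‖² ≤ (1 - ‖u_r‖²)(1 - ‖v_r‖²)`, whose square root is at most `1 - ‖u_r‖ ‖v_r‖`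
because `(1 - UV)² - (1 - U²)(1 - V²) = (U - V)²`. Letting `r → 1` gives the claim.
-/

open Complex MeasureTheory Real Filter Topology
open scoped ComplexConjugate

noncomputable def fourierExp (s : ℤ) (θ : ℝ) : ℂ := cexp (s * θ * I)

namespace fourierExp

lemma mul (s t : ℤ) (θ : ℝ) : fourierExp s θ * fourierExp t θ = fourierExp (s + t) θ := by
  simp only [fourierExp, ← Complex.exp_add]; push_cast; ring_nf

lemma conj_eq (s : ℤ) (θ : ℝ) : conj (fourierExp s θ) = fourierExp (-s) θ := by
  rw [fourierExp, fourierExp, ← Complex.exp_conj]; push_cast; simp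

lemma norm_eq (s : ℤ) (θ : ℝ) : ‖fourierExp s θ‖ = 1 := by
  simp [fourierExp, Complex.norm_exp]

@[simp] lemma zero (θ : ℝ) : fourierExp 0 θ = 1 := by simp [fourierExp]

lemma mul_neg_self (s : ℤ) (θ : ℝ) : fourierExp s θ * fourierExp (-s) θ = 1 := by
  rw [mul, add_neg_cancel, zero]

@[fun_prop] lemma continuous (s : ℤ) : Continuous (fourierExp s) := by
  unfold fourierExp; fun_prop

lemma one_pow_eq (n : ℕ) (θ : ℝ) : fourierExp 1 θ ^ n = fourierExp n θ := by
  rw [fourierExp, fourierExp, ← Complex.exp_nat_mul]; push_cast; ring_nf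

lemma integral (s : ℤ) :
    ∫ θ in (0 : ℝ)..2 * π, fourierExp s θ = if s = 0 then 2 * π else 0 := by
  split_ifs with hs
  · simp [hs]
  have hsI : (s : ℂ) * I ≠ 0 := by simp [hs, I_ne_zero]
  have hper : cexp (s * I * (2 * π)) = 1 := by
    rw [show (s : ℂ) * I * (2 * π) = s * (2 * π * I) by ring]
    exact exp_int_mul_two_pi_mul_I s
  simp only [fourierExp, show ∀ θ : ℝ, (s : ℂ) * θ * I = s * I * θ from fun θ => by ring]
  rw [integral_exp_mul_complex hsI]
  simp [hper]

end fourierExp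

theorem sq_integral_mul_le_integral_mul_sq {α : Type*} [MeasurableSpace α] {μ : Measure α}
    {w F G : α → ℝ} (hw : 0 ≤ w) (hFF : Integrable (fun x => w x * F x ^ 2) μ)
    (hGG : Integrable (fun x => w x * G x ^ 2) μ)
    (hFG : Integrable (fun x => w x * (F x * G x)) μ) :
    (∫ x, w x * (F x * G x) ∂μ) ^ 2 ≤ (∫ x, w x * F x ^ 2 ∂μ) * ∫ x, w x * G x ^ 2 ∂μ := by
  have hquad : ∀ t : ℝ, 0 ≤ (∫ x, w x * F x ^ 2 ∂μ) * (t * t)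
      + -(2 * ∫ x, w x * (F x * G x) ∂μ) * t + ∫ x, w x * G x ^ 2 ∂μ := by
    intro t
    have hexp : ∀ x, w x * (t * F x - G x) ^ 2
        = t ^ 2 * (w x * F x ^ 2) - 2 * t * (w x * (F x * G x)) + w x * G x ^ 2 :=
      fun x => by ring
    have h : 0 ≤ ∫ x, w x * (t * F x - G x) ^ 2 ∂μ :=
      integral_nonneg fun x => mul_nonneg (hw x) (sq_nonneg _)
    simp only [hexp] at h
    rw [integral_add ?_ hGG, integral_sub (hFF.const_mul _) (hFG.const_mul _),
      integral_const_mul, integral_const_mul] at h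
    · linarith
    · exact (hFF.const_mul _).sub (hFG.const_mul _)
  have := discrim_le_zero hquad
  rw [discrim] at this
  nlinarith

theorem norm_intervalIntegral_mul_sq_le {a b : ℝ} (hab : a ≤ b) {w : ℝ → ℝ} {f g : ℝ → ℂ}
    (hw : 0 ≤ w) (hwc : Continuous w) (hf : Continuous f) (hg : Continuous g) :
    ‖∫ x in a..b, (w x : ℂ) * (f x * g x)‖ ^ 2
      ≤ (∫ x in a..b, w x * ‖f x‖ ^ 2) * ∫ x in a..b, w x * ‖g x‖ ^ 2 := by
  have hnorm : ‖∫ x in a..b, (w x : ℂ) * (f x * g x)‖ ≤ ∫ x in a..b, w x * (‖f x‖ * ‖g x‖) := by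
    refine (intervalIntegral.norm_integral_le_integral_norm hab).trans_eq ?_
    congr 1 with x
    rw [norm_mul, norm_mul, norm_real, Real.norm_of_nonneg (hw x)]
  simp only [intervalIntegral.integral_of_le hab] at hnorm ⊢
  refine (pow_le_pow_left₀ (norm_nonneg _) hnorm 2).trans ?_
  exact sq_integral_mul_le_integral_mul_sq hw (by fun_prop : Continuous _).integrableOn_Ioc
    (by fun_prop : Continuous _).integrableOn_Ioc (by fun_prop : Continuous _).integrableOn_Ioc

noncomputable def circleSeries (q : ℕ → ℂ) (θ : ℝ) : ℂ := ∑' n, q n * fourierExp n θ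

section circleSeries

variable {q : ℕ → ℂ}

lemma hasSum_circleSeries (hq : Summable fun n => ‖q n‖) (θ : ℝ) :
    HasSum (fun n => q n * fourierExp n θ) (circleSeries q θ) :=
  (hq.of_norm_bounded fun n => by rw [norm_mul, fourierExp.norm_eq, mul_one]).hasSum

lemma continuous_circleSeries (hq : Summable fun n => ‖q n‖) : Continuous (circleSeries q) :=
  continuous_tsum (fun n => by fun_prop) hq fun n θ => by
    rw [norm_mul, fourierExp.norm_eq, mul_one]

lemma hasSum_integral_circleSeries_mul (hq : Summable fun n => ‖q n‖) (s : ℤ) :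
    HasSum (fun n : ℕ => q n * ∫ θ in (0 : ℝ)..2 * π, fourierExp (n + s) θ)
      (∫ θ in (0 : ℝ)..2 * π, circleSeries q θ * fourierExp s θ) := by
  simp only [← intervalIntegral.integral_const_mul]
  refine intervalIntegral.hasSum_integral_of_dominated_convergence (fun n _ => ‖q n‖)
    (fun n => (by fun_prop : Continuous _).aestronglyMeasurable) ?_ ?_
    intervalIntegrable_const ?_
  · refine fun n => ae_of_all _ fun θ _ => ?_
    rw [norm_mul, fourierExp.norm_eq, mul_one]
  · exact ae_of_all _ fun _ _ => hq
  · refine ae_of_all _ fun θ _ => ?_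
    have h := (hasSum_circleSeries hq θ).mul_right (fourierExp s θ)
    simp only [mul_assoc, fourierExp.mul] at h
    exact h

lemma integral_circleSeries_mul_fourierExp_neg (hq : Summable fun n => ‖q n‖) (m : ℕ) :
    ∫ θ in (0 : ℝ)..2 * π, circleSeries q θ * fourierExp (-m) θ = 2 * π * q m := by
  refine ((hasSum_integral_circleSeries_mul hq (-m)).unique ?_)
  convert hasSum_ite_eq m (2 * π * q m) using 1
  ext n
  simp only [fourierExp.integral, add_neg_eq_zero, Nat.cast_inj]
  split_ifs <;> simp_all [mul_comm]

lemma integral_circleSeries_mul_fourierExp (hq : Summable fun n => ‖q n‖) {m : ℕ} (hm : 1 ≤ m) :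
    ∫ θ in (0 : ℝ)..2 * π, circleSeries q θ * fourierExp m θ = 0 := by
  refine ((hasSum_integral_circleSeries_mul hq m).unique ?_)
  convert hasSum_zero with n
  rw [fourierExp.integral, if_neg (by omega), ofReal_zero, mul_zero]

lemma integral_re_circleSeries_mul_fourierExp_neg (hq : Summable fun n => ‖q n‖) {m : ℕ}
    (hm : 1 ≤ m) :
    ∫ θ in (0 : ℝ)..2 * π, ((circleSeries q θ).re : ℂ) * fourierExp (-m) θ = π * q m := by
  have hre : ∀ θ, ((circleSeries q θ).re : ℂ) * fourierExp (-m) θ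
      = (circleSeries q θ * fourierExp (-m) θ + conj (circleSeries q θ * fourierExp m θ)) / 2 := by
    intro θ
    rw [map_mul, fourierExp.conj_eq, ← add_mul, add_conj]
    push_cast; ring
  have hc := continuous_circleSeries hq
  simp only [hre]
  rw [intervalIntegral.integral_div, intervalIntegral.integral_add
    ((by fun_prop : Continuous _).intervalIntegrable _ _)
    ((by fun_prop : Continuous _).intervalIntegrable _ _), intervalIntegral.intervalIntegral_conj,
    integral_circleSeries_mul_fourierExp_neg hq, integral_circleSeries_mul_fourierExp hq hm,
    map_zero]
  ring

lemma integral_re_circleSeries (hq : Summable fun n => ‖q n‖) :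
    ∫ θ in (0 : ℝ)..2 * π, (circleSeries q θ).re = 2 * π * (q 0).re := by
  have h := congrArg re (integral_circleSeries_mul_fourierExp_neg hq 0)
  simp only [Nat.cast_zero, neg_zero, fourierExp.zero, mul_one] at h
  have hre := reCLM.intervalIntegral_comp_comm
    ((continuous_circleSeries hq).intervalIntegrable (μ := volume) 0 (2 * π))
  simp only [reCLM_apply] at hre
  rw [hre, h]
  simp

end circleSeries

theorem add_mul_le_one_of_sq_le {U V e : ℝ} (hU : 0 ≤ U) (hU1 : U ≤ 1) (hV1 : V ≤ 1)
    (he : e ^ 2 ≤ (1 - U ^ 2) * (1 - V ^ 2)) : e + U * V ≤ 1 := by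
  have hUV : U * V ≤ 1 := by nlinarith
  nlinarith [sq_nonneg (U - V)]

structure HasCircleMoments (ρ : ℝ → ℝ) (c : ℕ → ℂ) : Prop where
  continuous : Continuous ρ
  integral_eq : ∫ θ in (0 : ℝ)..2 * π, ρ θ = 2 * π
  integral_mul_fourierExp_neg : ∀ m : ℕ, 1 ≤ m →
    ∫ θ in (0 : ℝ)..2 * π, (ρ θ : ℂ) * fourierExp (-m) θ = 2 * π * c m

namespace HasCircleMoments

variable {ρ : ℝ → ℝ} {c : ℕ → ℂ}

lemma integral_mul_fourierExp (hρ : HasCircleMoments ρ c) {m : ℕ} (hm : 1 ≤ m) :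
    ∫ θ in (0 : ℝ)..2 * π, (ρ θ : ℂ) * fourierExp m θ = 2 * π * conj (c m) := by
  have h := congrArg conj (hρ.integral_mul_fourierExp_neg m hm)
  rw [← intervalIntegral.intervalIntegral_conj] at h
  simpa only [map_mul, conj_ofReal, fourierExp.conj_eq, neg_neg, map_ofNat] using h

lemma integral_mul_norm_fourierExp_sub_sq (hρ : HasCircleMoments ρ c) {k : ℕ} (hk : 1 ≤ k) :
    ∫ θ in (0 : ℝ)..2 * π, ρ θ * ‖fourierExp (-k) θ - c k‖ ^ 2 = 2 * π * (1 - ‖c k‖ ^ 2) := by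
  have hexp : ∀ θ, ((ρ θ * ‖fourierExp (-k) θ - c k‖ ^ 2 : ℝ) : ℂ)
      = ρ θ - conj (c k) * (ρ θ * fourierExp (-k) θ) - c k * (ρ θ * fourierExp k θ)
        + (‖c k‖ ^ 2 : ℝ) * ρ θ := by
    intro θ
    have h1 := fourierExp.mul_neg_self k θ
    push_cast
    rw [← mul_conj', map_sub, fourierExp.conj_eq, neg_neg, ← mul_conj' (c k)]
    linear_combination (ρ θ : ℂ) * h1
  have := hρ.continuous
  apply ofReal_injective
  rw [← intervalIntegral.integral_ofReal]
  simp only [hexp]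
  rw [intervalIntegral.integral_add ?_ ?_, intervalIntegral.integral_sub ?_ ?_,
    intervalIntegral.integral_sub ?_ ?_, intervalIntegral.integral_const_mul,
    intervalIntegral.integral_const_mul, intervalIntegral.integral_const_mul,
    intervalIntegral.integral_ofReal, hρ.integral_eq, hρ.integral_mul_fourierExp_neg k hk,
    hρ.integral_mul_fourierExp hk]
  · push_cast
    rw [← mul_conj' (c k)]
    ring
  all_goals exact Continuous.intervalIntegrable (by fun_prop) _ _

lemma integral_mul_fourierExp_sub_mul (hρ : HasCircleMoments ρ c) {k l : ℕ} (hk : 1 ≤ k)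
    (hl : 1 ≤ l) :
    ∫ θ in (0 : ℝ)..2 * π, (ρ θ : ℂ) * ((fourierExp (-k) θ - c k) * (fourierExp (-l) θ - c l))
      = 2 * π * (c (k + l) - c k * c l) := by
  have hexp : ∀ θ, (ρ θ : ℂ) * ((fourierExp (-k) θ - c k) * (fourierExp (-l) θ - c l))
      = ρ θ * fourierExp (-(k + l : ℕ)) θ - c l * (ρ θ * fourierExp (-k) θ)
        - c k * (ρ θ * fourierExp (-l) θ) + c k * c l * ρ θ := by
    intro θ
    rw [show (-(k + l : ℕ) : ℤ) = -k + -l by push_cast; ring, ← fourierExp.mul]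
    ring
  have := hρ.continuous
  simp only [hexp]
  rw [intervalIntegral.integral_add ?_ ?_, intervalIntegral.integral_sub ?_ ?_,
    intervalIntegral.integral_sub ?_ ?_, intervalIntegral.integral_const_mul,
    intervalIntegral.integral_const_mul, intervalIntegral.integral_const_mul,
    intervalIntegral.integral_ofReal, hρ.integral_eq, hρ.integral_mul_fourierExp_neg k hk,
    hρ.integral_mul_fourierExp_neg l hl, hρ.integral_mul_fourierExp_neg (k + l) (by omega)]
  · push_cast
    ring
  all_goals exact Continuous.intervalIntegrable (by fun_prop) _ _

lemma norm_le_one (hρ : HasCircleMoments ρ c) (hρ0 : 0 ≤ ρ) {k : ℕ} (hk : 1 ≤ k) :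
    ‖c k‖ ≤ 1 := by
  have h := hρ.integral_mul_norm_fourierExp_sub_sq hk
  have hnonneg : 0 ≤ ∫ θ in (0 : ℝ)..2 * π, ρ θ * ‖fourierExp (-k) θ - c k‖ ^ 2 :=
    intervalIntegral.integral_nonneg two_pi_pos.le fun θ _ => mul_nonneg (hρ0 θ) (sq_nonneg _)
  have : ‖c k‖ ^ 2 ≤ 1 := by nlinarith [pi_pos]
  nlinarith [norm_nonneg (c k)]

/-- Cauchy–Schwarz for `e^{-ikθ} - c k` and `e^{-ilθ} - c l` in `L²(ρ dθ)`. -/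
lemma norm_sub_mul_sq_le (hρ : HasCircleMoments ρ c) (hρ0 : 0 ≤ ρ) {k l : ℕ} (hk : 1 ≤ k)
    (hl : 1 ≤ l) : ‖c (k + l) - c k * c l‖ ^ 2 ≤ (1 - ‖c k‖ ^ 2) * (1 - ‖c l‖ ^ 2) := by
  have h := norm_intervalIntegral_mul_sq_le two_pi_pos.le hρ0 hρ.continuous
    (by fun_prop : Continuous fun θ => fourierExp (-k) θ - c k)
    (by fun_prop : Continuous fun θ => fourierExp (-l) θ - c l)
  rw [hρ.integral_mul_fourierExp_sub_mul hk hl, hρ.integral_mul_norm_fourierExp_sub_sq hk,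
    hρ.integral_mul_norm_fourierExp_sub_sq hl, norm_mul, mul_pow, norm_mul, Complex.norm_ofNat,
    norm_real, Real.norm_of_nonneg pi_pos.le] at h
  have hπ : 0 < (2 * π) ^ 2 := by positivity
  nlinarith

theorem norm_mul_sub_add_norm_mul_le_one (hρ : HasCircleMoments ρ c) (hρ0 : 0 ≤ ρ) {k l : ℕ}
    (hk : 1 ≤ k) (hl : 1 ≤ l) : ‖c k * c l - c (k + l)‖ + ‖c k‖ * ‖c l‖ ≤ 1 :=
  add_mul_le_one_of_sq_le (norm_nonneg _) (hρ.norm_le_one hρ0 hk) (hρ.norm_le_one hρ0 hl)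
    (by rw [norm_sub_rev]; exact hρ.norm_sub_mul_sq_le hρ0 hk hl)

end HasCircleMoments

theorem hasCircleMoments_re_circleSeries {q : ℕ → ℂ} (hq : Summable fun n => ‖q n‖)
    (hq0 : q 0 = 1) : HasCircleMoments (fun θ => (circleSeries q θ).re) (fun n => q n / 2) where
  continuous := continuous_re.comp (continuous_circleSeries hq)
  integral_eq := by rw [integral_re_circleSeries hq, hq0, one_re, mul_one]
  integral_mul_fourierExp_neg m hm := by
    rw [integral_re_circleSeries_mul_fourierExp_neg hq hm]
    ring

theorem summable_norm_mul_pow_of_summable_s11 {𝕜 : Type*} [NormedField 𝕜] {p : ℕ → 𝕜} {z : 𝕜}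
    (hz : Summable fun n => p n * z ^ n) {r : ℝ} (hr0 : 0 ≤ r) (hr : r < ‖z‖) :
    Summable fun n => ‖p n‖ * r ^ n := by
  obtain ⟨C, hC⟩ := hz.tendsto_atTop_zero.norm.bddAbove_range
  have hz0 : 0 < ‖z‖ := hr0.trans_lt hr
  refine Summable.of_nonneg_of_le (fun n => by positivity) (fun n => ?_)
    ((summable_geometric_of_lt_one (by positivity) ((div_lt_one hz0).2 hr)).mul_left C)
  calc ‖p n‖ * r ^ n = ‖p n * z ^ n‖ * (r / ‖z‖) ^ n := by
        rw [norm_mul, norm_pow, div_pow, mul_assoc, mul_div_cancel₀ _ (by positivity)]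
    _ ≤ C * (r / ‖z‖) ^ n := by gcongr; exact hC ⟨n, rfl⟩

theorem le_one_of_forall_pow_mul_le_one {L : ℝ} (N : ℕ)
    (h : ∀ r : ℝ, 0 ≤ r → r < 1 → r ^ N * L ≤ 1) : L ≤ 1 := by
  have hlim : Tendsto (fun r : ℝ => r ^ N * L) (𝓝[<] 1) (𝓝 L) := by
    have hc : Continuous fun r : ℝ => r ^ N * L := by fun_prop
    simpa using hc.continuousAt (x := 1) |>.tendsto.mono_left nhdsWithin_le_nhds
  refine le_of_tendsto hlim ?_
  filter_upwards [Ioo_mem_nhdsLT (show (0 : ℝ) < 1 by norm_num)] with r hr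
  exact h r hr.1.le hr.2

open Metric

section dilation

variable {g : ℂ → ℂ} {p : ℕ → ℂ} {r : ℝ}

lemma ofReal_mul_fourierExp_mem_ball (hr0 : 0 ≤ r) (hr1 : r < 1) (θ : ℝ) :
    (r : ℂ) * fourierExp 1 θ ∈ ball (0 : ℂ) 1 := by
  rwa [mem_ball_zero_iff, norm_mul, fourierExp.norm_eq, mul_one, norm_real,
    Real.norm_of_nonneg hr0]

lemma summable_norm_mul_pow_of_hasSum_ball
    (hsum : ∀ z ∈ ball (0 : ℂ) 1, HasSum (fun n : ℕ => p n * z ^ n) (g z))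
    (hr0 : 0 ≤ r) (hr1 : r < 1) : Summable fun n => ‖p n * (r : ℂ) ^ n‖ := by
  have hz : (((1 + r) / 2 : ℝ) : ℂ) ∈ ball (0 : ℂ) 1 := by
    rw [mem_ball_zero_iff, norm_real, Real.norm_of_nonneg (by positivity)]; linarith
  simpa [norm_mul, norm_pow, Real.norm_of_nonneg hr0] using
    summable_norm_mul_pow_of_summable_s11 (hsum _ hz).summable hr0
      (by rw [norm_real, Real.norm_of_nonneg (by positivity)]; linarith)

lemma circleSeries_mul_pow_eq
    (hsum : ∀ z ∈ ball (0 : ℂ) 1, HasSum (fun n : ℕ => p n * z ^ n) (g z))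
    (hr0 : 0 ≤ r) (hr1 : r < 1) (θ : ℝ) :
    circleSeries (fun n => p n * (r : ℂ) ^ n) θ = g (r * fourierExp 1 θ) := by
  refine (hsum _ (ofReal_mul_fourierExp_mem_ball hr0 hr1 θ)).tsum_eq ▸ tsum_congr fun n => ?_
  rw [mul_pow, fourierExp.one_pow_eq, mul_assoc]

end dilation

theorem norm_mul_sub_add_norm_mul_le_one_of_re_pos {g : ℂ → ℂ} {p : ℕ → ℂ} (hp0 : p 0 = 1)
    (hsum : ∀ z ∈ ball (0 : ℂ) 1, HasSum (fun n : ℕ => p n * z ^ n) (g z))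
    (hre : ∀ z ∈ ball (0 : ℂ) 1, 0 < (g z).re) {k l : ℕ} (hk : 1 ≤ k) (hl : 1 ≤ l) :
    ‖p k * p l / 4 - p (k + l) / 2‖ + ‖p k * p l‖ / 4 ≤ 1 := by
  refine le_one_of_forall_pow_mul_le_one (k + l) fun r hr0 hr1 => ?_
  have hρ := hasCircleMoments_re_circleSeries (summable_norm_mul_pow_of_hasSum_ball hsum hr0 hr1)
    (by simp [hp0])
  have hρ0 : ∀ θ, 0 ≤ (circleSeries (fun n => p n * (r : ℂ) ^ n) θ).re := fun θ => by
    rw [circleSeries_mul_pow_eq hsum hr0 hr1]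
    exact (hre _ (ofReal_mul_fourierExp_mem_ball hr0 hr1 θ)).le
  have h := hρ.norm_mul_sub_add_norm_mul_le_one hρ0 hk hl
  convert h using 1
  rw [show p k * r ^ k / 2 * (p l * r ^ l / 2) - p (k + l) * r ^ (k + l) / 2
    = (r : ℂ) ^ (k + l) * (p k * p l / 4 - p (k + l) / 2) by ring]
  simp only [norm_mul, norm_div, norm_pow, norm_real, Real.norm_of_nonneg hr0, Complex.norm_ofNat]
  ring

theorem prod_Icc_two_sub_div_factorial_pos {α : ℝ} (hα : α < 1) (n : ℕ) :
    0 < (∏ k ∈ Finset.Icc 2 n, ((k : ℝ) - 2 * α)) / n.factorial := by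
  refine div_pos (Finset.prod_pos fun k hk => ?_) (by positivity)
  have : (2 : ℝ) ≤ k := by exact_mod_cast (Finset.mem_Icc.1 hk).1
  linarith

/-- Let `α < 1` and `A n = (1/n!) ∏_{k=2}^n (k - 2α)`. If `g` is in the
Carathéodory class `P` with Taylor coefficients `p`, and the numbers `a n`
satisfy `a n = (A n / 2) * p (n-1)` for `n ≥ 2` (as do the Taylor coefficients
of any `f` in the closed convex hull of `C(α)`), then for all `m, n ≥ 2`:
`|a_m a_n/(A_m A_n) - a_{m+n-1}/A_{m+n-1}| + |a_m a_n|/(A_m A_n) ≤ 1`. -/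
theorem convexHull_convex_order_alpha_ineq (α : ℝ) (hα : α < 1)
    (A : ℕ → ℝ)
    (hA : ∀ n : ℕ, A n = (∏ k ∈ Finset.Icc 2 n, ((k : ℝ) - 2 * α)) / n.factorial)
    (g : ℂ → ℂ) (p : ℕ → ℂ)
    (hp0 : p 0 = 1)
    (hsum : ∀ z ∈ ball (0 : ℂ) 1, HasSum (fun n : ℕ => p n * z ^ n) (g z))
    (hre : ∀ z ∈ ball (0 : ℂ) 1, 0 < (g z).re)
    (a : ℕ → ℂ)
    (ha : ∀ n : ℕ, 2 ≤ n → a n = ((A n : ℝ) : ℂ) / 2 * p (n - 1))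
    (m n : ℕ) (hm : 2 ≤ m) (hn : 2 ≤ n) :
    ‖a m * a n / (((A m * A n : ℝ)) : ℂ)
        - a (m + n - 1) / ((A (m + n - 1) : ℝ) : ℂ)‖ +
      ‖a m * a n‖ / (A m * A n) ≤ 1 := by
  have hApos : ∀ N, 0 < A N := fun N => hA N ▸ prod_Icc_two_sub_div_factorial_pos hα N
  obtain ⟨k, rfl⟩ : ∃ k, m = k + 1 := ⟨m - 1, by omega⟩
  obtain ⟨l, rfl⟩ : ∃ l, n = l + 1 := ⟨n - 1, by omega⟩
  have hkl : k + 1 + (l + 1) - 1 = k + l + 1 := by omega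
  have h := norm_mul_sub_add_norm_mul_le_one_of_re_pos hp0 hsum hre (k := k) (l := l)
    (by omega) (by omega)
  rw [hkl, ha _ hm, ha _ hn, ha _ (by omega)]
  simp only [Nat.add_sub_cancel]
  have hA0 : ∀ N, ((A N : ℝ) : ℂ) ≠ 0 := fun N => ofReal_ne_zero.2 (hApos N).ne'
  convert h using 2
  · congr 1
    push_cast
    field_simp [hA0]
    ring
  · have hkl0 := mul_pos (hApos (k + 1)) (hApos (l + 1))
    rw [show (A (k + 1) : ℂ) / 2 * p k * ((A (l + 1) : ℂ) / 2 * p l)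
      = ((A (k + 1) * A (l + 1) / 4 : ℝ) : ℂ) * (p k * p l) by push_cast; ring,
      norm_mul, norm_real, Real.norm_of_nonneg (by positivity),
      div_eq_div_iff hkl0.ne' four_ne_zero]
    ring
end

section
/- Let a, b ∈ ℂ, r > 0 and M > 0. If |a − w·b| ≤ M for every w ∈ ℂ with |w − 1| = r, then |a − b| + r·|b| ≤ M. (Applied with a = a_n², b = a_{2n−1} and M = (n−1)² + r(2n−1), this shows that condition (D_r) implies condition (C_r) for functions in S, i.e. the third weak Zalcman conjecture implies the second.) -/
/-! Writing `w = 1 + r u` with `‖u‖ = 1` gives `a - w b = (a - b) - u (r b)`, and a suitable rotation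
`u` aligns `-u (r b)` with `a - b`, so that the triangle inequality is an equality there. -/

theorem RCLike.exists_norm_eq_one_and_norm_sub_mul_eq_add {K : Type*} [RCLike K] (x y : K) :
    ∃ u : K, ‖u‖ = 1 ∧ ‖x - u * y‖ = ‖x‖ + ‖y‖ := by
  obtain ⟨c, hc, hcx⟩ := exists_norm_eq_mul_self x
  obtain ⟨d, hd, hdy⟩ := exists_norm_eq_mul_self y
  have hc0 : c ≠ 0 := norm_ne_zero_iff.mp (hc.symm ▸ one_ne_zero)
  refine ⟨-d / c, by rw [norm_div, norm_neg, hc, hd, div_one], ?_⟩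
  have hrot : c * (x - -d / c * y) = ((‖x‖ + ‖y‖ : ℝ) : K) := by
    rw [ofReal_add, hcx, hdy]
    field_simp
    ring
  calc ‖x - -d / c * y‖ = ‖c * (x - -d / c * y)‖ := by rw [norm_mul, hc, one_mul]
    _ = ‖x‖ + ‖y‖ := by rw [hrot, norm_ofReal, abs_of_nonneg (by positivity)]

theorem circle_bound_implies_sum_bound_general (a b : ℂ) (r M : ℝ) (hr : 0 < r)
    (h : ∀ w : ℂ, ‖w - 1‖ = r → ‖a - w * b‖ ≤ M) :
    ‖a - b‖ + r * ‖b‖ ≤ M := by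
  obtain ⟨u, hu, hsum⟩ := RCLike.exists_norm_eq_one_and_norm_sub_mul_eq_add (a - b) (r * b)
  have hnorm_r : ‖(r : ℂ)‖ = r := by rw [Complex.norm_real, Real.norm_of_nonneg hr.le]
  have hw : ‖(1 + r * u) - 1‖ = r := by rw [add_sub_cancel_left, norm_mul, hnorm_r, hu, mul_one]
  calc ‖a - b‖ + r * ‖b‖ = ‖(a - b) - u * (r * b)‖ := by rw [hsum, norm_mul, hnorm_r]
    _ = ‖a - (1 + r * u) * b‖ := by ring_nf
    _ ≤ M := h _ hw

/-- If `|a − w b| ≤ M` for every `w : ℂ` on the circle `|w − 1| = r`, then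
`|a − b| + r |b| ≤ M`. (This is the lemma showing that condition `(D_r)` implies
condition `(C_r)` for functions in `S`.) -/
theorem circle_bound_implies_sum_bound (a b : ℂ) (r M : ℝ) (hr : 0 < r) (hM : 0 < M)
    (h : ∀ w : ℂ, ‖w - 1‖ = r → ‖a - w * b‖ ≤ M) :
    ‖a - b‖ + r * ‖b‖ ≤ M :=
  circle_bound_implies_sum_bound_general a b r M hr h
end

section
/- Assume that there exists t ∈ (0,1] such that every f ∈ S satisfies |a_n² − t·a_{2n−1}| ≤ n² − t(2n−1) for all n ≥ 2 (the weak Zalcman condition (B_t)), and assume Littlewood's bound: |a_n| ≤ e·n for every f ∈ S and every n ≥ 2. Then every f ∈ S satisfies the Bieberbach inequality |a_n| ≤ n for all n ≥ 2. -/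
/-!
If every coefficient of every `f ∈ S` satisfies `|a_n| ≤ C n` with `C ≥ 1`, then condition `(B_t)`
applied at `n` together with the bound at `2n − 1` gives
`|a_n|² ≤ n² − t(2n − 1) + t C (2n − 1) ≤ C n²`, i.e. `|a_n| ≤ √C n`.
Starting from Littlewood's constant `e` and iterating yields `|a_n| ≤ e^{2^{-k}} n` for every `k`,
and letting `k → ∞` gives `|a_n| ≤ n`.
-/

open Metric

/-- `f` is in the class `S`: analytic and injective on the unit disk with Taylor
expansion `f(z) = z + Σ_{n≥2} a_n z^n` (so `f(0) = 0`, `f'(0) = 1`). -/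
def IsInClassS (f : ℂ → ℂ) (a : ℕ → ℂ) : Prop :=
  (∀ z ∈ ball (0 : ℂ) 1, HasSum (fun n : ℕ => a n * z ^ n) (f z)) ∧
    Set.InjOn f (ball (0 : ℂ) 1) ∧ a 0 = 0 ∧ a 1 = 1

open Filter Topology

def WeakZalcmanCondition (t : ℝ) : Prop :=
  ∀ (f : ℂ → ℂ) (a : ℕ → ℂ), IsInClassS f a → ∀ n : ℕ, 2 ≤ n →
    ‖(a n) ^ 2 - (t : ℂ) * a (2 * n - 1)‖ ≤ (n : ℝ) ^ 2 - t * (2 * (n : ℝ) - 1)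

def ClassSCoeffBound (C : ℝ) : Prop :=
  ∀ (f : ℂ → ℂ) (a : ℕ → ℂ), IsInClassS f a → ∀ n : ℕ, 2 ≤ n → ‖a n‖ ≤ C * n

theorem norm_sq_le_of_weak_zalcman_ineq {x y : ℂ} {t C m : ℝ} (ht0 : 0 ≤ t) (ht1 : t ≤ 1)
    (hC : 1 ≤ C) (hxy : ‖x ^ 2 - (t : ℂ) * y‖ ≤ m ^ 2 - t * (2 * m - 1))
    (hy : ‖y‖ ≤ C * (2 * m - 1)) :
    ‖x‖ ^ 2 ≤ C * m ^ 2 := by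
  have hty : ‖(t : ℂ) * y‖ ≤ t * (C * (2 * m - 1)) := by
    rw [norm_mul, Complex.norm_real, Real.norm_of_nonneg ht0]
    exact mul_le_mul_of_nonneg_left hy ht0
  have htriangle : ‖x‖ ^ 2 ≤ ‖x ^ 2 - (t : ℂ) * y‖ + ‖(t : ℂ) * y‖ := by
    rw [← norm_pow]
    calc ‖x ^ 2‖ = ‖(x ^ 2 - (t : ℂ) * y) + (t : ℂ) * y‖ := by rw [sub_add_cancel]
      _ ≤ _ := norm_add_le _ _
  -- `t (C - 1)(2m - 1) ≤ (C - 1)(2m - 1)⁺ ≤ (C - 1) m²`, as `2m - 1 ≤ m²`.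
  have hslack : t * ((C - 1) * (2 * m - 1)) ≤ (C - 1) * m ^ 2 := by
    rcases le_total 0 ((C - 1) * (2 * m - 1)) with hpos | hneg
    · nlinarith [sq_nonneg (m - 1)]
    · nlinarith [sq_nonneg m]
  linarith

namespace ClassSCoeffBound

theorem sqrt {t C : ℝ} (hB : WeakZalcmanCondition t) (ht0 : 0 ≤ t) (ht1 : t ≤ 1)
    (hC : 1 ≤ C) (h : ClassSCoeffBound C) : ClassSCoeffBound (Real.sqrt C) := by
  intro f a hf n hn
  have hcast : ((2 * n - 1 : ℕ) : ℝ) = 2 * (n : ℝ) - 1 := by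
    rw [Nat.cast_sub (by omega)]
    push_cast
    ring
  have hodd := h f a hf (2 * n - 1) (by omega)
  rw [hcast] at hodd
  have hsq := norm_sq_le_of_weak_zalcman_ineq ht0 ht1 hC (hB f a hf n hn) hodd
  rwa [← Real.sqrt_le_sqrt_iff (by positivity), Real.sqrt_sq (norm_nonneg _),
    Real.sqrt_mul (by linarith), Real.sqrt_sq (Nat.cast_nonneg n)] at hsq

theorem exp_div_two_pow {t s : ℝ} (hB : WeakZalcmanCondition t) (ht0 : 0 ≤ t) (ht1 : t ≤ 1)
    (hs : 0 ≤ s) (h : ClassSCoeffBound (Real.exp s)) (k : ℕ) :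
    ClassSCoeffBound (Real.exp (s / 2 ^ k)) := by
  induction k with
  | zero => simpa using h
  | succ k ih =>
    rw [pow_succ, ← div_div, Real.exp_half]
    exact ih.sqrt hB ht0 ht1 (Real.one_le_exp (by positivity))

theorem of_tendsto {c : ℕ → ℝ} {L : ℝ} (h : ∀ k, ClassSCoeffBound (c k))
    (hc : Tendsto c atTop (𝓝 L)) : ClassSCoeffBound L :=
  fun f a hf n hn =>
    ge_of_tendsto (hc.mul_const (n : ℝ)) (Eventually.of_forall fun k => h k f a hf n hn)

end ClassSCoeffBound

/-- If for some `t ∈ (0, 1]` every `f ∈ S` satisfies the weak Zalcman condition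
`(B_t)`: `|a_n² − t a_{2n−1}| ≤ n² − t(2n−1)` for all `n ≥ 2`, then — granting
Littlewood's bound `|a_n| ≤ e n` — every `f ∈ S` satisfies the Bieberbach
inequality `|a_n| ≤ n` for all `n ≥ 2`. -/
theorem weak_zalcman_implies_bieberbach
    (hBt : ∃ t : ℝ, 0 < t ∧ t ≤ 1 ∧
      ∀ (f : ℂ → ℂ) (a : ℕ → ℂ), IsInClassS f a → ∀ n : ℕ, 2 ≤ n →
        ‖(a n) ^ 2 - (t : ℂ) * a (2 * n - 1)‖ ≤
          (n : ℝ) ^ 2 - t * (2 * (n : ℝ) - 1))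
    (hLittlewood : ∀ (f : ℂ → ℂ) (a : ℕ → ℂ), IsInClassS f a → ∀ n : ℕ, 2 ≤ n →
      ‖a n‖ ≤ Real.exp 1 * n) :
    ∀ (f : ℂ → ℂ) (a : ℕ → ℂ), IsInClassS f a → ∀ n : ℕ, 2 ≤ n →
      ‖a n‖ ≤ n := by
  obtain ⟨t, ht0, ht1, hB⟩ := hBt
  have hbounds : ∀ k : ℕ, ClassSCoeffBound (Real.exp (1 / 2 ^ k)) :=
    ClassSCoeffBound.exp_div_two_pow hB ht0.le ht1 zero_le_one hLittlewood
  have hlim : Tendsto (fun k : ℕ => Real.exp (1 / 2 ^ k)) atTop (𝓝 1) := by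
    have h := (tendsto_inv_atTop_zero.comp (tendsto_pow_atTop_atTop_of_one_lt one_lt_two)).rexp
    simpa [one_div] using h
  intro f a hf n hn
  simpa using ClassSCoeffBound.of_tendsto hbounds hlim f a hf n hn
end
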